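/- arXiv:2410.21887 — 9 statements merged into one kernel-verified Lean document; each statement's English description precedes it below -/
import Mathlib

section
/- Let G be a simple C4-free graph and x a vertex such that every edge incident to x is contained in a triangle. Then the degree of x is even. -/
open Finset

noncomputable section
open scoped Classical

variable {V : Type*}

/-- Degree of a vertex. -/
def deg [Fintype V] (G : SimpleGraph V) (x : V) : ℕ :=
  (Finset.univ.filter fun z => G.Adj x z).card

/-- Maximum degree. -/
def maxDeg [Fintype V] (G : SimpleGraph V) : ℕ :=
  Finset.univ.sup (deg G)

/-- Normalized graph Laplacian. -/
def lap [Fintype V] (G : SimpleGraph V) (f : V → ℝ) (x : V) : ℝ :=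
  (deg G x : ℝ)⁻¹ * ∑ z ∈ Finset.univ.filter (fun z => G.Adj x z), (f z - f x)

/-- `f` is 1-Lipschitz with respect to the graph distance. -/
def Lip1 (G : SimpleGraph V) (f : V → ℝ) : Prop :=
  ∀ u v : V, |f u - f v| ≤ (G.dist u v : ℝ)

/-- Lin-Lu-Yau curvature via the Münch–Wojciechowski limit-free formulation. -/
def kappa [Fintype V] (G : SimpleGraph V) (x y : V) : ℝ :=
  sInf {r : ℝ | ∃ f : V → ℝ, Lip1 G f ∧ f y - f x = 1 ∧ r = lap G f x - lap G f y}

/-- Every edge has positive Lin-Lu-Yau curvature. -/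
def PosLLY [Fintype V] (G : SimpleGraph V) : Prop :=
  ∀ x y : V, G.Adj x y → 0 < kappa G x y

/-- `G` contains no 4-cycle (as a subgraph). -/
def C4Free (G : SimpleGraph V) : Prop :=
  ∀ a b c d : V, a ≠ b → b ≠ c → c ≠ d → d ≠ a → a ≠ c → b ≠ d →
    ¬(G.Adj a b ∧ G.Adj b c ∧ G.Adj c d ∧ G.Adj d a)

/-- Cycle graph on `ZMod n`. -/
def cyc (n : ℕ) : SimpleGraph (ZMod n) :=
  SimpleGraph.fromRel (fun i j => j = i + 1)

/-- Friendship graph `F_k`: `k` triangles sharing the common vertex `0`. -/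
def friendship (k : ℕ) : SimpleGraph (Fin (2 * k + 1)) :=
  SimpleGraph.fromRel (fun i j => i.val = 0 ∨ j.val = 0 ∨ (i.val + 1) / 2 = (j.val + 1) / 2)

/-- The graph `T`: a triangle `0,1,2` and a vertex `3` joined to each triangle
vertex by a path of length two (through `4,5,6` respectively). -/
def graphT : SimpleGraph (Fin 7) :=
  SimpleGraph.fromRel (fun i j => (i, j) ∈
    ([(0,1),(1,2),(0,2),(0,4),(4,3),(1,5),(5,3),(2,6),(6,3)] : List (Fin 7 × Fin 7)))

lemma even_card_of_inv {s : Finset V} (p : V → V)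
    (hmem : ∀ z ∈ s, p z ∈ s) (hinv : ∀ z ∈ s, p (p z) = z)
    (hne : ∀ z ∈ s, p z ≠ z) : Even s.card := by
  classical
  obtain ⟨n, hn⟩ : ∃ n, s.card = n := ⟨_, rfl⟩
  induction n using Nat.strong_induction_on generalizing s with
  | _ n ih =>
    rcases s.eq_empty_or_nonempty with rfl | ⟨z, hz⟩
    · simp
    · set t := s \ {z, p z} with ht
      have hzs := hmem z hz
      have hcard : t.card = s.card - 2 := by
        rw [ht, card_sdiff_of_subset (by intro w hw; simp at hw; rcases hw with rfl|rfl <;> assumption)]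
        rw [card_insert_of_notMem (by simp [Ne.symm (hne z hz)]), card_singleton]
      have h2 : 2 ≤ s.card := by
        have := card_le_card (show {z, p z} ⊆ s by
          intro w hw; simp at hw; rcases hw with rfl|rfl <;> assumption)
        simpa [card_pair (Ne.symm (hne z hz))] using this
      have hmem' : ∀ w ∈ t, p w ∈ t := by
        intro w hw
        simp only [ht, mem_sdiff, mem_insert, mem_singleton] at hw ⊢
        refine ⟨hmem w hw.1, ?_⟩
        rintro (h | h)
        · apply hw.2; right
          have := congrArg p h
          rwa [hinv w hw.1] at this
        · apply hw.2; left
          have := congrArg p h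
          rwa [hinv w hw.1, hinv z hz] at this
      have := ih (s.card - 2) (by omega) hmem'
        (fun w hw => hinv w (mem_sdiff.mp hw).1)
        (fun w hw => hne w (mem_sdiff.mp hw).1) hcard
      rw [hcard] at this
      obtain ⟨k, hk⟩ := this
      exact hn ▸ ⟨k + 1, by omega⟩

theorem stmt1 [Fintype V] (G : SimpleGraph V) (h4 : C4Free G) (x : V)
    (htri : ∀ y : V, G.Adj x y → ∃ z : V, G.Adj x z ∧ G.Adj y z) :
    Even (deg G x) := by
  unfold deg
  classical
  set s := Finset.univ.filter fun z => G.Adj x z with hs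
  have hmemiff : ∀ z, z ∈ s ↔ G.Adj x z := by intro z; simp [hs]
  have huniq : ∀ z w1 w2, G.Adj x z → G.Adj x w1 → G.Adj z w1 →
      G.Adj x w2 → G.Adj z w2 → w1 = w2 := by
    intro z w1 w2 hxz hxw1 hzw1 hxw2 hzw2
    by_contra hne
    exact h4 x w1 z w2 hxw1.ne hzw1.ne' hzw2.ne hxw2.ne' hxz.ne hne
      ⟨hxw1, hzw1.symm, hzw2, hxw2.symm⟩
  choose! p hp1 hp2 using htri
  apply even_card_of_inv p
  · intro z hz; rw [hmemiff] at hz ⊢; exact (hp1 z hz)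
  · intro z hz; rw [hmemiff] at hz
    have h1 := hp1 z hz; have h2 := hp2 z hz
    have h1' := hp1 (p z) h1; have h2' := hp2 (p z) h1
    exact huniq (p z) (p (p z)) z h1 h1' h2' hz h2.symm
  · intro z hz; rw [hmemiff] at hz
    exact fun h => (hp2 z hz).ne h.symm
end
end

section
/- Let G be a simple C4-free graph, and let xy be an edge of G not contained in any triangle. If f is the function on vertices defined by f(z) = -1 for z a neighbor of x other than y, f(x) = 0, and f(z) = 1 for z in the closed neighborhood of y except x, then f is 1-Lipschitz with respect to the graph distance restricted to N(x) ∪ N(y). -/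
open Finset

noncomputable section
open scoped Classical

variable {V : Type*}

theorem stmt2 (G : SimpleGraph V) (hconn : G.Connected) (h4 : C4Free G)
    (x y : V) (hxy : G.Adj x y) (htri : ¬ ∃ z : V, G.Adj x z ∧ G.Adj y z)
    (f : V → ℝ)
    (hf : f = fun z => if z = x then 0 else if z = y ∨ G.Adj y z then 1
      else if G.Adj x z then -1 else 0) :
    ∀ u v : V, (G.Adj x u ∨ G.Adj y u) → (G.Adj x v ∨ G.Adj y v) →
      |f u - f v| ≤ (G.dist u v : ℝ) := by
  have hval : ∀ u : V, (G.Adj x u ∨ G.Adj y u) →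
      (u = x ∧ f u = 0) ∨ (u = y ∧ f u = 1) ∨ (G.Adj y u ∧ u ≠ x ∧ f u = 1) ∨
      (G.Adj x u ∧ u ≠ y ∧ ¬ G.Adj y u ∧ f u = -1) := by
    intro u hu
    subst hf
    by_cases hx : u = x
    · exact Or.inl ⟨hx, by simp [hx]⟩
    by_cases h1 : u = y
    · exact Or.inr (Or.inl ⟨h1, by simp [hx, h1, hxy.ne']⟩)
    rcases hu with hu | hu
    · have hny : ¬ G.Adj y u := fun h => htri ⟨u, hu, h⟩
      exact Or.inr (Or.inr (Or.inr ⟨hu, h1, hny, by simp [hx, h1, hny, hu]⟩))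
    · exact Or.inr (Or.inr (Or.inl ⟨hu, hx, by simp [hx, h1, hu]⟩))
  have htwo : ∀ u v : V, u ≠ v → ¬ G.Adj u v → (2 : ℝ) ≤ G.dist u v := by
    intro u v hne hnadj
    have h0 : 1 ≤ G.dist u v := hconn.pos_dist_of_ne hne
    have h1 : G.dist u v ≠ 1 := fun h => hnadj (SimpleGraph.dist_eq_one_iff_adj.mp h)
    have : 2 ≤ G.dist u v := by omega
    exact_mod_cast this
  have key : ∀ u v : V, (G.Adj x u ∨ G.Adj y u) → (G.Adj x v ∨ G.Adj y v) →
      f u - f v ≤ (G.dist u v : ℝ) := by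
    intro u v hu hv
    by_cases huv : u = v
    · subst huv; simp
    have hd1 : (1 : ℝ) ≤ G.dist u v := by
      exact_mod_cast hconn.pos_dist_of_ne huv
    rcases hval u hu with ⟨hux, h1⟩ | ⟨huy, h1⟩ | ⟨huA, hunx, h1⟩ |
        ⟨huxA, huny, hunadj, h1⟩ <;>
      rcases hval v hv with ⟨hvx', h1'⟩ | ⟨hvy', h1'⟩ | ⟨hvA, hvnx, h1'⟩ |
        ⟨hvxA, hvny, hvnadj, h1'⟩ <;>
      rw [h1, h1']
    · linarith
    · linarith
    · linarith
    · linarith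
    · linarith
    · linarith
    · linarith
    · -- u = y, f v = -1
      have hnadj : ¬ G.Adj u v := by rw [huy]; exact hvnadj
      have := htwo u v huv hnadj
      linarith
    · linarith
    · linarith
    · linarith
    · -- Adj y u, f v = -1 : C4 argument
      have hnadj : ¬ G.Adj u v := by
        intro hadj2
        refine h4 x v u y (G.ne_of_adj hvxA) (fun h => huv h.symm)
          ?_ hxy.ne' hunx.symm hvny
          ⟨hvxA, hadj2.symm, huA.symm, hxy.symm⟩
        rintro rfl; exact G.ne_of_adj huA rfl
      have := htwo u v huv hnadj
      linarith
    · linarith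
    · linarith
    · linarith
    · linarith
  intro u v hu hv
  rw [abs_sub_le_iff]
  exact ⟨key u v hu hv, by rw [SimpleGraph.dist_comm]; exact key v u hv hu⟩
end
end

section
/- Let G be a simple connected graph and xy an edge. If w is the unique common neighbor of x and y, G is C4-free, and f is defined by f(z) = -1 for z ∈ N(x)\{y,w}, f(x) = 0, and f(z) = 1 for z ∈ N[y]\{x}, then f is 1-Lipschitz on N(x) ∪ N(y): in particular every vertex of N(x)\{y,w} has distance at least 2 from every vertex of N(y)\{x,w}. -/
open Finset

noncomputable section
open scoped Classical

variable {V : Type*}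

theorem stmt3 (G : SimpleGraph V) (hconn : G.Connected) (h4 : C4Free G)
    (x y w : V) (hxy : G.Adj x y) (hxw : G.Adj x w) (hyw : G.Adj y w)
    (huniq : ∀ z : V, G.Adj x z → G.Adj y z → z = w)
    (f : V → ℝ)
    (hf : f = fun z => if z = x then 0 else if z = y ∨ G.Adj y z then 1
      else if G.Adj x z then -1 else 0) :
    (∀ u v : V, (G.Adj x u ∨ G.Adj y u) → (G.Adj x v ∨ G.Adj y v) →
      |f u - f v| ≤ (G.dist u v : ℝ)) ∧
    (∀ u v : V, G.Adj x u → u ≠ y → u ≠ w → G.Adj y v → v ≠ x → v ≠ w →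
      2 ≤ G.dist u v) := by
  have key : ∀ a b : V, G.Adj a b → (a = y ∨ G.Adj y a) → a ≠ x → G.Adj x b → b ≠ x →
      ¬(b = y ∨ G.Adj y b) → False := by
    intro a b hab ha hax hxb hbx hb
    rcases ha with rfl | hya
    · exact hb (Or.inr hab)
    · have hby : b ≠ y := fun h => hb (Or.inl h)
      exact h4 x b a y hbx.symm hab.ne.symm hya.ne' hxy.ne' hax.symm hby
        ⟨hxb, hab.symm, hya.symm, hxy.symm⟩
  have hbound : ∀ z : V, |f z| ≤ 1 := by
    intro z; rw [hf]; dsimp only; split_ifs <;> norm_num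
  constructor
  · intro u v _ _
    by_cases huv : u = v
    · subst huv; simp
    by_cases hadj : G.Adj u v
    · have hd : G.dist u v = 1 := SimpleGraph.dist_eq_one_iff_adj.mpr hadj
      rw [hd]
      -- show |f u - f v| ≤ 1
      rw [abs_sub_le_iff]
      constructor
      · -- f u - f v ≤ 1 : exclude f u = 1, f v = -1
        rw [hf]; dsimp only
        split_ifs <;> norm_num
        all_goals try exact (key u v hadj (by tauto) (by assumption) (by assumption)
          (by assumption) (by tauto)).elim
      · rw [hf]; dsimp only
        split_ifs <;> norm_num
        all_goals exact (key v u hadj.symm (by tauto) (by assumption) (by assumption)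
          (by assumption) (by tauto)).elim
    · have h1 : 0 < G.dist u v := hconn.pos_dist_of_ne huv
      have h2 : G.dist u v ≠ 1 := fun h => hadj (SimpleGraph.dist_eq_one_iff_adj.mp h)
      have hd : 2 ≤ G.dist u v := by omega
      calc |f u - f v| ≤ |f u| + |f v| := abs_sub _ _
        _ ≤ 1 + 1 := add_le_add (hbound u) (hbound v)
        _ ≤ (G.dist u v : ℝ) := by exact_mod_cast hd
  · intro u v hxu huy huw hyv hvx hvw
    have huv : u ≠ v := fun h => huw (huniq u hxu (h ▸ hyv))
    have hadj : ¬G.Adj u v := by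
      intro h
      exact h4 x u v y hxu.ne huv hyv.ne'
        hxy.ne' (fun hh => hvx hh.symm) huy ⟨hxu, h, hyv.symm, hxy.symm⟩
    have h1 : 0 < G.dist u v := hconn.pos_dist_of_ne huv
    have h2 : G.dist u v ≠ 1 := fun h => hadj (SimpleGraph.dist_eq_one_iff_adj.mp h)
    omega
end
end

section
/- Let G be a simple graph and xy an edge not contained in any 3-cycle or 4-cycle. Then κ_LLY(x,y) ≤ 1/d_x + 2/d_y − 1. -/
open Finset

noncomputable section
open scoped Classical

variable {V : Type*}

theorem stmt6 [Fintype V] (G : SimpleGraph V) (hconn : G.Connected)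
    (x y : V) (hxy : G.Adj x y)
    (h3 : ¬ ∃ z : V, G.Adj x z ∧ G.Adj y z)
    (h4 : ¬ ∃ a b : V, a ≠ b ∧ a ≠ x ∧ a ≠ y ∧ b ≠ x ∧ b ≠ y ∧
      G.Adj x a ∧ G.Adj a b ∧ G.Adj b y) :
    kappa G x y ≤ 1 / (deg G x : ℝ) + 2 / (deg G y : ℝ) - 1 := by
  classical
  have hyx : y ≠ x := hxy.ne'
  -- the set A = {x} ∪ (N(x) \ {y})
  set A : Finset V := Finset.univ.filter (fun z => z = x ∨ (G.Adj x z ∧ z ≠ y)) with hA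
  have hxA : x ∈ A := by simp [hA]
  have hAne : A.Nonempty := ⟨x, hxA⟩
  set dA : V → ℕ := fun v => A.inf' hAne (fun a => G.dist v a) with hdA
  set g : V → ℕ := fun v => min 3 (1 + dA v) with hg
  set f : V → ℝ := fun v => (g v : ℝ) with hf
  -- key Lipschitz-type estimate on g
  have key : ∀ u v : V, g u ≤ g v + G.dist u v := by
    intro u v
    obtain ⟨a, haA, hav⟩ := Finset.exists_mem_eq_inf' hAne (fun a => G.dist v a)
    have h1 : dA u ≤ G.dist u a := Finset.inf'_le _ haA
    have h2 : G.dist u a ≤ G.dist u v + G.dist v a := hconn.dist_triangle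
    have h4' : dA v = G.dist v a := hav
    simp only [hg]
    omega
  have hLip : Lip1 G f := by
    intro u v
    have h1 := key u v
    have h2 := key v u
    rw [SimpleGraph.dist_comm] at h2
    rw [abs_sub_le_iff]
    constructor <;> simp only [hf] <;>
      · rw [sub_le_iff_le_add, ← Nat.cast_add]
        exact_mod_cast by omega
  -- values of g
  have hdAzero : ∀ z ∈ A, dA z = 0 := by
    intro z hz
    have h : dA z ≤ G.dist z z := Finset.inf'_le _ hz
    rw [SimpleGraph.dist_self] at h
    exact Nat.le_zero.mp h
  have hgx : g x = 1 := by simp [hg, hdAzero x hxA]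
  have hyA : y ∉ A := by simp [hA, hyx]
  have hdAy : dA y = 1 := by
    have hle : dA y ≤ G.dist y x := Finset.inf'_le _ hxA
    rw [SimpleGraph.dist_comm, (G.dist_eq_one_iff_adj).mpr hxy] at hle
    have hne0 : dA y ≠ 0 := by
      intro h0
      obtain ⟨a, haA, hav⟩ := Finset.exists_mem_eq_inf' hAne (fun a => G.dist y a)
      have heq : dA y = G.dist y a := hav
      rw [h0] at heq
      obtain rfl := (hconn.dist_eq_zero_iff).mp heq.symm
      exact hyA haA
    omega
  have hgy : g y = 2 := by simp [hg, hdAy]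
  have hgb : ∀ b : V, G.Adj y b → b ≠ x → g b = 3 := by
    intro b hb hbx
    have hbA : ∀ a ∈ A, 2 ≤ G.dist b a := by
      intro a haA
      simp only [hA, Finset.mem_filter] at haA
      have hne : b ≠ a := by
        rcases haA.2 with rfl | ⟨hax, hay⟩
        · exact hbx
        · rintro rfl; exact h3 ⟨b, hax, hb⟩
      have hnadj : ¬ G.Adj b a := by
        rcases haA.2 with rfl | ⟨hax, hay⟩
        · intro hadj; exact h3 ⟨b, hadj.symm, hb⟩
        · intro hadj
          exact h4 ⟨a, b, hne.symm, hax.ne', hay, hbx, hb.ne', hax, hadj.symm, hb.symm⟩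
      have h0 : G.dist b a ≠ 0 := fun h0 => hne ((hconn.dist_eq_zero_iff).mp h0)
      have h1 : G.dist b a ≠ 1 := fun h1 => hnadj ((G.dist_eq_one_iff_adj).mp h1)
      omega
    have h2 : 2 ≤ dA b := Finset.le_inf' _ _ hbA
    simp only [hg]; omega
  have hfx : f x = 1 := by simp [hf, hgx]
  have hfy : f y = 2 := by simp [hf, hgy]
  have hdy0 : 0 < deg G y := by
    rw [deg]
    exact Finset.card_pos.mpr ⟨x, by simp [hxy.symm]⟩
  have hdx0 : 0 < deg G x := by
    rw [deg]
    exact Finset.card_pos.mpr ⟨y, by simp [hxy]⟩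
  -- sum at x
  have hsumx : ∑ z ∈ Finset.univ.filter (fun z => G.Adj x z), (f z - f x) = 1 := by
    have hymem : y ∈ Finset.univ.filter (fun z => G.Adj x z) := by simp [hxy]
    rw [← Finset.add_sum_erase _ _ hymem]
    have hz0 : ∀ z ∈ (Finset.univ.filter (fun z => G.Adj x z)).erase y, f z - f x = 0 := by
      intro z hz
      rw [Finset.mem_erase, Finset.mem_filter] at hz
      have hzA : z ∈ A := by
        simp only [hA, Finset.mem_filter, Finset.mem_univ, true_and]
        exact Or.inr ⟨hz.2.2, hz.1⟩
      have : g z = 1 := by simp [hg, hdAzero z hzA]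
      simp [hf, this, hgx]
    rw [Finset.sum_eq_zero hz0, hfy, hfx]; ring
  -- sum at y
  have hsumy : ∑ z ∈ Finset.univ.filter (fun z => G.Adj y z), (f z - f y)
      = (deg G y : ℝ) - 2 := by
    have hxmem : x ∈ Finset.univ.filter (fun z => G.Adj y z) := by simp [hxy.symm]
    rw [← Finset.add_sum_erase _ _ hxmem]
    have hcard : ((Finset.univ.filter (fun z => G.Adj y z)).erase x).card = deg G y - 1 := by
      rw [Finset.card_erase_of_mem hxmem]; rfl
    have hz1 : ∀ z ∈ (Finset.univ.filter (fun z => G.Adj y z)).erase x, f z - f y = 1 := by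
      intro z hz
      rw [Finset.mem_erase, Finset.mem_filter] at hz
      have : g z = 3 := hgb z hz.2.2 hz.1
      simp [hf, this, hgy]
      norm_num
    rw [Finset.sum_congr rfl hz1, Finset.sum_const, hcard, hfx, hfy]
    have : ((deg G y - 1 : ℕ) : ℝ) = (deg G y : ℝ) - 1 := by
      push_cast [Nat.cast_sub hdy0]; ring
    rw [nsmul_eq_mul, this]; ring
  -- membership
  have hmem : (1 / (deg G x : ℝ) + 2 / (deg G y : ℝ) - 1) ∈
      {r : ℝ | ∃ f : V → ℝ, Lip1 G f ∧ f y - f x = 1 ∧ r = lap G f x - lap G f y} := by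
    refine ⟨f, hLip, by rw [hfy, hfx]; ring, ?_⟩
    rw [lap, lap, hsumx, hsumy]
    have hdx' : (deg G x : ℝ) ≠ 0 := Nat.cast_ne_zero.mpr hdx0.ne'
    have hdy' : (deg G y : ℝ) ≠ 0 := Nat.cast_ne_zero.mpr hdy0.ne'
    field_simp
    ring
  -- bounded below
  have hlapbd : ∀ (F : V → ℝ) (v : V), Lip1 G F → |lap G F v| ≤ 1 := by
    intro F v hF
    rw [lap, abs_mul, abs_inv, Nat.abs_cast]
    have h1 : |∑ z ∈ Finset.univ.filter (fun z => G.Adj v z), (F z - F v)| ≤ (deg G v : ℝ) := by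
      calc |∑ z ∈ Finset.univ.filter (fun z => G.Adj v z), (F z - F v)|
          ≤ ∑ z ∈ Finset.univ.filter (fun z => G.Adj v z), |F z - F v| :=
            Finset.abs_sum_le_sum_abs _ _
        _ ≤ ∑ z ∈ Finset.univ.filter (fun z => G.Adj v z), 1 := by
            refine Finset.sum_le_sum (fun z hz => ?_)
            have hadj : G.Adj v z := (Finset.mem_filter.mp hz).2
            have hd : G.dist z v = 1 := (G.dist_eq_one_iff_adj).mpr hadj.symm
            have := hF z v
            rw [hd] at this
            exact_mod_cast this
        _ = (deg G v : ℝ) := by simp [deg]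
    rcases eq_or_ne (deg G v) 0 with h | h
    · simp [h]
    · have hpos : (0:ℝ) < (deg G v : ℝ) := by positivity
      calc ((deg G v : ℝ))⁻¹ * |∑ z ∈ Finset.univ.filter (fun z => G.Adj v z), (F z - F v)|
          ≤ ((deg G v : ℝ))⁻¹ * (deg G v : ℝ) := by
            apply mul_le_mul_of_nonneg_left h1 (by positivity)
        _ = 1 := by field_simp
  have hbdd : BddBelow
      {r : ℝ | ∃ f : V → ℝ, Lip1 G f ∧ f y - f x = 1 ∧ r = lap G f x - lap G f y} := by
    refine ⟨-2, ?_⟩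
    rintro r ⟨F, hF, hFyx, rfl⟩
    have h1 := abs_le.mp (hlapbd F x hF)
    have h2 := abs_le.mp (hlapbd F y hF)
    linarith [h1.1, h2.2]
  rw [kappa]
  exact csInf_le hbdd hmem
end
end

section
/- Let G be a simple graph and xy an edge not contained in any 3-, 4-, or 5-cycle. Then κ_LLY(x,y) = 2/d_x + 2/d_y − 2. -/
open Finset

noncomputable section
open scoped Classical

variable {V : Type*}

lemma dist_two_common (G : SimpleGraph V) {u v : V} (h : G.dist u v = 2) :
    ∃ c, G.Adj u c ∧ G.Adj c v := by
  obtain ⟨p, hp⟩ := SimpleGraph.exists_walk_of_dist_ne_zero (G := G) (u := u) (v := v)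
    (by omega)
  rw [h] at hp
  cases p with
  | nil => simp at hp
  | cons h1 q =>
    cases q with
    | nil => simp at hp
    | cons h2 r =>
      cases r with
      | nil => exact ⟨_, h1, h2⟩
      | cons h3 s => simp [SimpleGraph.Walk.length_cons] at hp

lemma two_le_dist (G : SimpleGraph V) (hconn : G.Connected) {u v : V}
    (hne : u ≠ v) (hna : ¬ G.Adj u v) : 2 ≤ G.dist u v := by
  have h0 : G.dist u v ≠ 0 := fun h => hne (hconn.dist_eq_zero_iff.mp h)
  have h1 : G.dist u v ≠ 1 := fun h => hna (SimpleGraph.dist_eq_one_iff_adj.mp h)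
  omega

theorem stmt7 [Fintype V] (G : SimpleGraph V) (hconn : G.Connected)
    (x y : V) (hxy : G.Adj x y)
    (h3 : ¬ ∃ z : V, G.Adj x z ∧ G.Adj y z)
    (h4 : ¬ ∃ a b : V, a ≠ b ∧ a ≠ x ∧ a ≠ y ∧ b ≠ x ∧ b ≠ y ∧
      G.Adj x a ∧ G.Adj a b ∧ G.Adj b y)
    (h5 : ¬ ∃ a b c : V, a ≠ b ∧ b ≠ c ∧ a ≠ c ∧
      a ≠ x ∧ a ≠ y ∧ b ≠ x ∧ b ≠ y ∧ c ≠ x ∧ c ≠ y ∧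
      G.Adj x a ∧ G.Adj a b ∧ G.Adj b c ∧ G.Adj c y) :
    kappa G x y = 2 / (deg G x : ℝ) + 2 / (deg G y : ℝ) - 2 := by
  push_neg at h3
  set Nx : Finset V := Finset.univ.filter (fun z => G.Adj x z) with hNx
  set Ny : Finset V := Finset.univ.filter (fun z => G.Adj y z) with hNy
  have hyNx : y ∈ Nx := by simp [hNx, hxy]
  have hxNy : x ∈ Ny := by simp [hNy, hxy.symm]
  have hdx : 1 ≤ deg G x := Finset.card_pos.mpr ⟨y, hyNx⟩
  have hdy : 1 ≤ deg G y := Finset.card_pos.mpr ⟨x, hxNy⟩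
  have hdxR : (deg G x : ℝ) ≠ 0 := by positivity
  have hdyR : (deg G y : ℝ) ≠ 0 := by positivity
  -- distance facts
  have hdxy1 : G.dist x y = 1 := SimpleGraph.dist_eq_one_iff_adj.mpr hxy
  have hzxna : ∀ z : V, G.Adj y z → z ≠ x → ¬ G.Adj x z := by
    intro z hz hzx hadj; exact h3 z hadj hz
  have hwyna : ∀ w : V, G.Adj x w → w ≠ y → ¬ G.Adj y w := by
    intro w hw hwy hadj; exact h3 w hw hadj
  have hdxz : ∀ z : V, G.Adj y z → z ≠ x → 2 ≤ G.dist x z := by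
    intro z hz hzx
    exact two_le_dist G hconn (Ne.symm hzx) (hzxna z hz hzx)
  have hdyw : ∀ w : V, G.Adj x w → w ≠ y → 2 ≤ G.dist y w := by
    intro w hw hwy
    exact two_le_dist G hconn (Ne.symm hwy) (fun h => hwyna w hw hwy h)
  have hdwz : ∀ w z : V, G.Adj x w → w ≠ y → G.Adj y z → z ≠ x → 3 ≤ G.dist w z := by
    intro w z hw hwy hz hzx
    have hwz : w ≠ z := by rintro rfl; exact h3 w hw hz
    have hnadj : ¬ G.Adj w z := by
      intro hadj
      exact h4 ⟨w, z, hwz, hw.ne', hwy, hzx, hz.ne', hw, hadj, hz.symm⟩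
    have h2 : G.dist w z ≠ 2 := by
      intro hd
      obtain ⟨c, hc1, hc2⟩ := dist_two_common G hd
      have hcx : c ≠ x := by rintro rfl; exact hzxna z hz hzx hc2
      have hcy : c ≠ y := by rintro rfl; exact hwyna w hw hwy hc1.symm
      exact h5 ⟨w, c, z, hc1.ne, hc2.ne, hwz, hw.ne', hwy,
        hcx, hcy, hzx, hz.ne', hw, hc1, hc2, hz.symm⟩
    have := two_le_dist G hconn hwz hnadj
    omega
  -- the optimal function
  set f0 : V → ℝ := fun v =>
    if v = x then 0 else if v = y then 1 else if G.Adj x v then -1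
    else if G.Adj y v then 2 else 0 with hf0
  have hf0x : f0 x = 0 := by simp [hf0]
  have hf0y : f0 y = 1 := by simp [hf0, hxy.ne']
  have hf0w : ∀ w, G.Adj x w → w ≠ y → f0 w = -1 := by
    intro w hw hwy; simp [hf0, hw.ne', hwy, hw]
  have hf0z : ∀ z, G.Adj y z → z ≠ x → f0 z = 2 := by
    intro z hz hzx; simp [hf0, hzx, hz.ne', hzxna z hz hzx, hz]
  set A : Finset V := insert x (Nx ∪ Ny) with hA
  have hAx : x ∈ A := Finset.mem_insert_self _ _
  have hAy : y ∈ A := by simp [hA, Finset.mem_union, hyNx]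
  have hANe : A.Nonempty := ⟨x, hAx⟩
  have hclass : ∀ a ∈ A, a = x ∨ a = y ∨ (G.Adj x a ∧ a ≠ y) ∨
      (G.Adj y a ∧ a ≠ x) := by
    intro a ha
    rcases Finset.mem_insert.mp ha with h | h
    · exact Or.inl h
    rcases Finset.mem_union.mp h with h | h
    · by_cases hay : a = y
      · exact Or.inr (Or.inl hay)
      · exact Or.inr (Or.inr (Or.inl ⟨(Finset.mem_filter.mp h).2, hay⟩))
    · by_cases hax : a = x
      · exact Or.inl hax
      · exact Or.inr (Or.inr (Or.inr ⟨(Finset.mem_filter.mp h).2, hax⟩))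
  have key : ∀ a ∈ A, ∀ b ∈ A, f0 a ≤ f0 b + (G.dist b a : ℝ) := by
    intro a ha b hb
    rcases hclass a ha with ha1 | ha1 | ⟨haw, hay⟩ | ⟨haz, hax⟩ <;>
      rcases hclass b hb with hb1 | hb1 | ⟨hbw, hby⟩ | ⟨hbz, hbx⟩
    · rw [ha1, hb1, hf0x]; simp [SimpleGraph.dist_self]
    · rw [ha1, hb1, hf0x, hf0y]
      have h0 : (0:ℝ) ≤ (G.dist y x : ℝ) := Nat.cast_nonneg _
      linarith
    · rw [ha1, hf0x, hf0w _ hbw hby]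
      have h1 : G.dist b x = 1 := SimpleGraph.dist_eq_one_iff_adj.mpr hbw.symm
      rw [h1]; norm_num
    · rw [ha1, hf0x, hf0z _ hbz hbx]
      have h0 : (0:ℝ) ≤ (G.dist b x : ℝ) := Nat.cast_nonneg _
      linarith
    · rw [ha1, hb1, hf0y, hf0x, hdxy1]; norm_num
    · rw [ha1, hb1, hf0y]; simp [SimpleGraph.dist_self]
    · rw [ha1, hf0y, hf0w _ hbw hby]
      have h2 : (2:ℝ) ≤ (G.dist b y : ℝ) := by
        rw [SimpleGraph.dist_comm]; exact_mod_cast hdyw b hbw hby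
      linarith
    · rw [ha1, hf0y, hf0z _ hbz hbx]
      have h0 : (0:ℝ) ≤ (G.dist b y : ℝ) := Nat.cast_nonneg _
      linarith
    · rw [hb1, hf0w _ haw hay, hf0x]
      have h0 : (0:ℝ) ≤ (G.dist x a : ℝ) := Nat.cast_nonneg _
      linarith
    · rw [hb1, hf0w _ haw hay, hf0y]
      have h0 : (0:ℝ) ≤ (G.dist y a : ℝ) := Nat.cast_nonneg _
      linarith
    · rw [hf0w _ haw hay, hf0w _ hbw hby]
      have h0 : (0:ℝ) ≤ (G.dist b a : ℝ) := Nat.cast_nonneg _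
      linarith
    · rw [hf0w _ haw hay, hf0z _ hbz hbx]
      have h0 : (0:ℝ) ≤ (G.dist b a : ℝ) := Nat.cast_nonneg _
      linarith
    · rw [hb1, hf0z _ haz hax, hf0x]
      have h2 : (2:ℝ) ≤ (G.dist x a : ℝ) := by exact_mod_cast hdxz a haz hax
      linarith
    · rw [hb1, hf0z _ haz hax, hf0y]
      have h1 : G.dist y a = 1 := SimpleGraph.dist_eq_one_iff_adj.mpr haz
      rw [h1]; norm_num
    · rw [hf0z _ haz hax, hf0w _ hbw hby]
      have h2 : (3:ℝ) ≤ (G.dist b a : ℝ) := by exact_mod_cast hdwz b a hbw hby haz hax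
      linarith
    · rw [hf0z _ haz hax, hf0z _ hbz hbx]
      have h0 : (0:ℝ) ≤ (G.dist b a : ℝ) := Nat.cast_nonneg _
      linarith
  set f : V → ℝ := fun v => A.inf' hANe (fun a => f0 a + (G.dist a v : ℝ)) with hfdef
  have hfa : ∀ a ∈ A, f a = f0 a := by
    intro a ha
    apply le_antisymm
    · have := Finset.inf'_le (fun b => f0 b + (G.dist b a : ℝ)) ha
      have h0 : (G.dist a a : ℝ) = 0 := by simp [SimpleGraph.dist_self]
      rw [h0, add_zero] at this
      exact this
    · apply Finset.le_inf'
      intro b hb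
      exact key a ha b hb
  have hstep : ∀ u v : V, f u ≤ f v + (G.dist v u : ℝ) := by
    intro u v
    obtain ⟨b, hb, hbv⟩ := Finset.exists_mem_eq_inf' hANe (fun a => f0 a + (G.dist a v : ℝ))
    have h1 : f u ≤ f0 b + (G.dist b u : ℝ) :=
      Finset.inf'_le (fun a => f0 a + (G.dist a u : ℝ)) hb
    have h2 : (G.dist b u : ℝ) ≤ (G.dist b v : ℝ) + (G.dist v u : ℝ) := by
      exact_mod_cast hconn.dist_triangle
    have h3 : f v = f0 b + (G.dist b v : ℝ) := hbv
    linarith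
  have hLipf : Lip1 G f := by
    intro u v
    rw [abs_sub_le_iff]
    have hcomm : (G.dist v u : ℝ) = (G.dist u v : ℝ) := by rw [SimpleGraph.dist_comm]
    constructor
    · have := hstep u v; linarith
    · have := hstep v u; linarith
  have hfx : f x = 0 := by rw [hfa x hAx, hf0x]
  have hfy : f y = 1 := by rw [hfa y hAy, hf0y]
  -- sums for f
  have hsumx : ∑ z ∈ Nx, (f z - f x) = 2 - (deg G x : ℝ) := by
    rw [← Finset.add_sum_erase _ _ hyNx]
    have : ∀ z ∈ Nx.erase y, f z - f x = -1 := by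
      intro z hz
      obtain ⟨hzy, hzNx⟩ := Finset.mem_erase.mp hz
      have hadj : G.Adj x z := (Finset.mem_filter.mp hzNx).2
      have hzA : z ∈ A := by simp [hA, Finset.mem_union, hzNx]
      rw [hfa z hzA, hf0w z hadj hzy, hfx]; ring
    rw [Finset.sum_congr rfl this, Finset.sum_const, Finset.card_erase_of_mem hyNx]
    have hcard : Nx.card = deg G x := rfl
    rw [hcard, hfy, hfx]
    have : ((deg G x - 1 : ℕ) : ℝ) = (deg G x : ℝ) - 1 := by
      push_cast [hdx]; ring
    rw [nsmul_eq_mul, this]; ring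
  have hsumy : ∑ z ∈ Ny, (f z - f y) = (deg G y : ℝ) - 2 := by
    rw [← Finset.add_sum_erase _ _ hxNy]
    have : ∀ z ∈ Ny.erase x, f z - f y = 1 := by
      intro z hz
      obtain ⟨hzx, hzNy⟩ := Finset.mem_erase.mp hz
      have hadj : G.Adj y z := (Finset.mem_filter.mp hzNy).2
      have hzA : z ∈ A := by simp [hA, Finset.mem_union, hzNy]
      rw [hfa z hzA, hf0z z hadj hzx, hfy]; ring
    rw [Finset.sum_congr rfl this, Finset.sum_const, Finset.card_erase_of_mem hxNy]
    have hcard : Ny.card = deg G y := rfl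
    rw [hcard, hfy, hfx]
    have : ((deg G y - 1 : ℕ) : ℝ) = (deg G y : ℝ) - 1 := by
      push_cast [hdy]; ring
    rw [nsmul_eq_mul, this]; ring
  have hlapf : lap G f x - lap G f y = 2 / (deg G x : ℝ) + 2 / (deg G y : ℝ) - 2 := by
    unfold lap
    rw [show (Finset.univ.filter fun z => G.Adj x z) = Nx from rfl,
      show (Finset.univ.filter fun z => G.Adj y z) = Ny from rfl, hsumx, hsumy]
    field_simp
    ring
  -- lower bound
  have hlb : ∀ r ∈ {r : ℝ | ∃ g : V → ℝ, Lip1 G g ∧ g y - g x = 1 ∧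
      r = lap G g x - lap G g y},
      2 / (deg G x : ℝ) + 2 / (deg G y : ℝ) - 2 ≤ r := by
    rintro r ⟨g, hg, hgyx, rfl⟩
    have hboundx : ∀ z ∈ Nx.erase y, (-1 : ℝ) ≤ g z - g x := by
      intro z hz
      obtain ⟨hzy, hzNx⟩ := Finset.mem_erase.mp hz
      have hadj : G.Adj x z := (Finset.mem_filter.mp hzNx).2
      have := hg z x
      rw [SimpleGraph.dist_comm, SimpleGraph.dist_eq_one_iff_adj.mpr hadj] at this
      rw [abs_le] at this
      push_cast at this
      linarith [this.1]
    have hboundy : ∀ z ∈ Ny.erase x, g z - g y ≤ 1 := by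
      intro z hz
      obtain ⟨hzx, hzNy⟩ := Finset.mem_erase.mp hz
      have hadj : G.Adj y z := (Finset.mem_filter.mp hzNy).2
      have := hg z y
      rw [SimpleGraph.dist_comm, SimpleGraph.dist_eq_one_iff_adj.mpr hadj] at this
      rw [abs_le] at this
      push_cast at this
      linarith [this.2]
    have hsx : (2 : ℝ) - (deg G x : ℝ) ≤ ∑ z ∈ Nx, (g z - g x) := by
      rw [← Finset.add_sum_erase _ _ hyNx]
      have h1 := Finset.card_nsmul_le_sum (Nx.erase y) _ _ hboundx
      rw [Finset.card_erase_of_mem hyNx, nsmul_eq_mul] at h1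
      have hcard : Nx.card = deg G x := rfl
      rw [hcard] at h1
      have hc : ((deg G x - 1 : ℕ) : ℝ) = (deg G x : ℝ) - 1 := by
        push_cast [Nat.cast_sub hdx]; ring
      rw [hc] at h1
      linarith
    have hsy : ∑ z ∈ Ny, (g z - g y) ≤ (deg G y : ℝ) - 2 := by
      rw [← Finset.add_sum_erase _ _ hxNy]
      have h1 := Finset.sum_le_card_nsmul (Ny.erase x) _ _ hboundy
      rw [Finset.card_erase_of_mem hxNy, nsmul_eq_mul] at h1
      have hcard : Ny.card = deg G y := rfl
      rw [hcard] at h1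
      have hc : ((deg G y - 1 : ℕ) : ℝ) = (deg G y : ℝ) - 1 := by
        push_cast [Nat.cast_sub hdy]; ring
      rw [hc] at h1
      have hgx : g x - g y = -1 := by linarith
      linarith
    have hinvx : (0:ℝ) < (deg G x : ℝ)⁻¹ := by positivity
    have hinvy : (0:ℝ) < (deg G y : ℝ)⁻¹ := by positivity
    have hlx : (deg G x : ℝ)⁻¹ * (2 - (deg G x : ℝ)) ≤ lap G g x := by
      unfold lap
      rw [show (Finset.univ.filter fun z => G.Adj x z) = Nx from rfl]
      exact mul_le_mul_of_nonneg_left hsx (le_of_lt hinvx)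
    have hly : lap G g y ≤ (deg G y : ℝ)⁻¹ * ((deg G y : ℝ) - 2) := by
      unfold lap
      rw [show (Finset.univ.filter fun z => G.Adj y z) = Ny from rfl]
      exact mul_le_mul_of_nonneg_left hsy (le_of_lt hinvy)
    have heq : (deg G x : ℝ)⁻¹ * (2 - (deg G x : ℝ)) - (deg G y : ℝ)⁻¹ * ((deg G y : ℝ) - 2)
        = 2 / (deg G x : ℝ) + 2 / (deg G y : ℝ) - 2 := by
      field_simp; ring
    linarith
  have hmem : (2 / (deg G x : ℝ) + 2 / (deg G y : ℝ) - 2) ∈ {r : ℝ | ∃ g : V → ℝ,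
      Lip1 G g ∧ g y - g x = 1 ∧ r = lap G g x - lap G g y} :=
    ⟨f, hLipf, by rw [hfy, hfx]; ring, hlapf.symm⟩
  unfold kappa
  exact le_antisymm (csInf_le ⟨_, fun r hr => hlb r hr⟩ hmem) (le_csInf ⟨_, hmem⟩ hlb)
end
end

section
/- Let G be a simple connected triangle-free, C4-free, positively LLY-curved graph with maximum degree 3 and minimum degree at least 2. If xy is an edge with d_x = 3, then d_y = 2. -/
open Finset

noncomputable section
open scoped Classical

variable {V : Type*}

theorem stmt11 [Fintype V] (G : SimpleGraph V) (hconn : G.Connected)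
    (h3 : G.CliqueFree 3) (h4 : C4Free G) (hpos : PosLLY G)
    (hmin : ∀ v : V, 2 ≤ deg G v) (hmax : maxDeg G = 3)
    (x y : V) (hxy : G.Adj x y) (hdx : deg G x = 3) :
    deg G y = 2 := by
  -- deg y is 2 or 3
  have hdy3 : deg G y ≤ 3 := by
    rw [← hmax]; exact Finset.le_sup (Finset.mem_univ y)
  have hdy2 : 2 ≤ deg G y := hmin y
  by_contra hne
  have hdy : deg G y = 3 := by omega
  -- triangle-free helper
  have htri : ∀ a b c : V, G.Adj a b → G.Adj a c → G.Adj b c → False := by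
    intro a b c hab hac hbc
    exact h3 {a, b, c} (SimpleGraph.is3Clique_triple_iff.mpr ⟨hab, hac, hbc⟩)
  -- A : the two neighbors of x other than y
  set A : Finset V := (Finset.univ.filter fun z => G.Adj x z).erase y with hAdef
  have hyN : y ∈ Finset.univ.filter fun z => G.Adj x z := by
    simp [hxy]
  have hcardA : A.card = 2 := by
    rw [hAdef, Finset.card_erase_of_mem hyN]
    have : (Finset.univ.filter fun z => G.Adj x z).card = 3 := hdx
    omega
  have hA : A.Nonempty := Finset.card_pos.mp (by omega)
  have hmemA : ∀ a, a ∈ A → G.Adj x a ∧ a ≠ y := by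
    intro a ha
    rw [hAdef, Finset.mem_erase, Finset.mem_filter] at ha
    exact ⟨ha.2.2, ha.1⟩
  -- the test function
  set dA : V → ℕ := fun v => A.inf' hA (fun a => G.dist v a) with hdAdef
  set f : V → ℝ := fun v => ((min (dA v) 2 : ℕ) : ℝ) - 1 with hfdef
  -- Lipschitz key estimate
  have hkey : ∀ u v : V, min (dA u) 2 ≤ min (dA v) 2 + G.dist u v := by
    intro u v
    obtain ⟨a, haA, hav⟩ := Finset.exists_mem_eq_inf' hA (fun a => G.dist v a)
    have h1 : dA u ≤ G.dist u a := Finset.inf'_le _ haA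
    have h2 : G.dist u a ≤ G.dist u v + G.dist v a := hconn.dist_triangle
    have h3 : dA v = G.dist v a := hav
    omega
  have hlip : Lip1 G f := by
    intro u v
    have h1 := hkey u v
    have h2 := hkey v u
    rw [SimpleGraph.dist_comm] at h2
    rw [hfdef]
    simp only
    rw [abs_sub_le_iff]
    have h1' : ((dA u ⊓ 2 : ℕ) : ℝ) ≤ ((dA v ⊓ 2 : ℕ) : ℝ) + (G.dist u v : ℝ) := by
      exact_mod_cast h1
    have h2' : ((dA v ⊓ 2 : ℕ) : ℝ) ≤ ((dA u ⊓ 2 : ℕ) : ℝ) + (G.dist u v : ℝ) := by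
      exact_mod_cast h2
    constructor <;> linarith
  -- values of f
  have hfa : ∀ a ∈ A, f a = -1 := by
    intro a ha
    have h0 : dA a = 0 := by
      have h : dA a ≤ G.dist a a := Finset.inf'_le _ ha
      rw [SimpleGraph.dist_self] at h
      omega
    rw [hfdef]; simp [h0]
  have hfx : f x = 0 := by
    have hub : dA x ≤ 1 := by
      obtain ⟨a, ha⟩ := hA
      have : G.dist x a = 1 := SimpleGraph.dist_eq_one_iff_adj.mpr (hmemA a ha).1
      calc dA x ≤ G.dist x a := Finset.inf'_le _ ha
        _ = 1 := this
    have hlb : 1 ≤ dA x := by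
      rw [hdAdef]
      apply Finset.le_inf'
      intro a ha
      exact hconn.pos_dist_of_ne (fun h => G.loopless.irrefl x (h ▸ (hmemA a ha).1))
    have : dA x = 1 := le_antisymm hub hlb
    rw [hfdef]; simp [this]
  have hfar : ∀ z, G.Adj y z → z ≠ x → ∀ a ∈ A, 2 ≤ G.dist z a := by
    intro z hyz hzx a ha
    obtain ⟨hxa, hay⟩ := hmemA a ha
    have hza : z ≠ a := by
      rintro rfl
      exact htri x y z hxy hxa hyz
    have hnadj : ¬ G.Adj z a := by
      intro hadj
      exact h4 x y z a hxy.ne hyz.ne hza (fun h => G.loopless.irrefl x (h ▸ hxa))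
        hzx.symm (fun h => hay h.symm) ⟨hxy, hyz, hadj, hxa.symm⟩
    have h0 : G.dist z a ≠ 0 := by
      intro h
      exact hza (hconn.dist_eq_zero_iff.mp h)
    have h1 : G.dist z a ≠ 1 := fun h => hnadj (SimpleGraph.dist_eq_one_iff_adj.mp h)
    omega
  have hfary : ∀ a ∈ A, 2 ≤ G.dist y a := by
    intro a ha
    obtain ⟨hxa, hay⟩ := hmemA a ha
    have hya : y ≠ a := fun h => hay h.symm
    have hnadj : ¬ G.Adj y a := fun hadj => htri x y a hxy hxa hadj
    have h0 : G.dist y a ≠ 0 := fun h => hya (hconn.dist_eq_zero_iff.mp h)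
    have h1 : G.dist y a ≠ 1 := fun h => hnadj (SimpleGraph.dist_eq_one_iff_adj.mp h)
    omega
  have hdA2 : ∀ v : V, (∀ a ∈ A, 2 ≤ G.dist v a) → f v = 1 := by
    intro v hv
    have : 2 ≤ dA v := by
      rw [hdAdef]; exact Finset.le_inf' _ _ hv
    rw [hfdef]
    simp only
    rw [min_eq_right this]
    norm_num
  have hfy : f y = 1 := hdA2 y hfary
  have hfz : ∀ z, G.Adj y z → z ≠ x → f z = 1 := fun z hz hzx => hdA2 z (hfar z hz hzx)
  -- compute lap at x
  have hNx : (Finset.univ.filter fun z => G.Adj x z) = insert y A := by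
    rw [hAdef, Finset.insert_erase hyN]
  have hlapx : lap G f x = (3 : ℝ)⁻¹ * (-1) := by
    rw [lap, hdx, hNx]
    congr 1
    rw [Finset.sum_insert (Finset.notMem_erase y _)]
    have : ∀ a ∈ A, f a - f x = -1 := by
      intro a ha; rw [hfa a ha, hfx]; ring
    rw [Finset.sum_congr rfl this, Finset.sum_const, hcardA, hfy, hfx]
    norm_num
  -- compute lap at y
  have hxM : x ∈ Finset.univ.filter fun z => G.Adj y z := by
    simp [hxy.symm]
  have hlapy : lap G f y = (3 : ℝ)⁻¹ * (-1) := by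
    rw [lap, hdy]
    congr 1
    rw [← Finset.insert_erase hxM, Finset.sum_insert (Finset.notMem_erase x _)]
    have : ∀ z ∈ (Finset.univ.filter fun z => G.Adj y z).erase x, f z - f y = 0 := by
      intro z hz
      rw [Finset.mem_erase, Finset.mem_filter] at hz
      rw [hfz z hz.2.2 hz.1, hfy]; ring
    rw [Finset.sum_congr rfl this, Finset.sum_const, hfx, hfy]
    norm_num
  -- conclude
  have hmem : (0 : ℝ) ∈ {r : ℝ | ∃ g : V → ℝ, Lip1 G g ∧ g y - g x = 1 ∧
      r = lap G g x - lap G g y} := by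
    refine ⟨f, hlip, by rw [hfy, hfx]; ring, ?_⟩
    rw [hlapx, hlapy]; ring
  have hposk := hpos x y hxy
  rw [kappa] at hposk
  by_cases hbdd : BddBelow {r : ℝ | ∃ g : V → ℝ, Lip1 G g ∧ g y - g x = 1 ∧
      r = lap G g x - lap G g y}
  · have := csInf_le hbdd hmem
    linarith
  · rw [Real.sInf_of_not_bddBelow hbdd] at hposk
    exact lt_irrefl _ hposk
end
end

section
/- Let G be a simple connected C4-free positively LLY-curved graph with minimum degree at least 2 and maximum degree 4. Then G contains the friendship graph F_2 (two triangles sharing a vertex) as a subgraph. -/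
open Finset

noncomputable section
open scoped Classical

variable {V : Type*}

lemma two_le_dist_of {G : SimpleGraph V} (hconn : G.Connected) {u v : V}
    (hne : u ≠ v) (hnadj : ¬ G.Adj u v) : 2 ≤ G.dist u v := by
  have h0 : 0 < G.dist u v := hconn.pos_dist_of_ne hne
  have h1 : G.dist u v ≠ 1 := fun h => hnadj (SimpleGraph.dist_eq_one_iff_adj.mp h)
  omega

lemma lap_abs_le [Fintype V] {G : SimpleGraph V} {f : V → ℝ} (hf : Lip1 G f)
    (v : V) : |lap G f v| ≤ 1 := by
  rcases Nat.eq_zero_or_pos (deg G v) with h | h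
  · have he : (Finset.univ.filter fun z => G.Adj v z) = ∅ := Finset.card_eq_zero.mp h
    simp [lap, he]
  · have hsum : |∑ z ∈ Finset.univ.filter (fun z => G.Adj v z), (f z - f v)| ≤ (deg G v : ℝ) := by
      calc |∑ z ∈ Finset.univ.filter (fun z => G.Adj v z), (f z - f v)|
          ≤ ∑ z ∈ Finset.univ.filter (fun z => G.Adj v z), |f z - f v| :=
            Finset.abs_sum_le_sum_abs _ _
        _ ≤ ∑ _z ∈ Finset.univ.filter (fun z => G.Adj v z), (1 : ℝ) := by
            refine Finset.sum_le_sum fun z hz => ?_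
            have hadj : G.Adj v z := (Finset.mem_filter.mp hz).2
            have hd : G.dist z v = 1 := SimpleGraph.dist_eq_one_iff_adj.mpr hadj.symm
            have := hf z v
            rw [hd] at this
            simpa using this
        _ = (deg G v : ℝ) := by simp [deg]
    have hdpos : (0 : ℝ) < (deg G v : ℝ) := by exact_mod_cast h
    have : |lap G f v| = ((deg G v : ℝ))⁻¹ *
        |∑ z ∈ Finset.univ.filter (fun z => G.Adj v z), (f z - f v)| := by
      rw [lap, abs_mul, abs_inv, abs_of_nonneg (by positivity : (0:ℝ) ≤ (deg G v : ℝ))]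
    rw [this]
    calc ((deg G v : ℝ))⁻¹ * |∑ z ∈ Finset.univ.filter (fun z => G.Adj v z), (f z - f v)|
        ≤ ((deg G v : ℝ))⁻¹ * (deg G v : ℝ) :=
          mul_le_mul_of_nonneg_left hsum (by positivity)
      _ = 1 := inv_mul_cancel₀ hdpos.ne'

lemma triangle_of_deg4 [Fintype V] {G : SimpleGraph V} (hconn : G.Connected)
    (h4 : C4Free G) (hpos : PosLLY G) (hmin : ∀ v : V, 2 ≤ deg G v)
    {x y : V} (hxy : G.Adj x y) (hdx : deg G x = 4) :
    ∃ m : V, G.Adj x m ∧ G.Adj y m := by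
  by_contra hno
  push_neg at hno
  -- hno : ∀ m, G.Adj x m → ¬ G.Adj y m
  set Nx : Finset V := Finset.univ.filter (fun z => G.Adj x z) with hNxdef
  have hyNx : y ∈ Nx := by simp [hNxdef, hxy]
  set Z : Finset V := Nx.erase y with hZdef
  have hZcard : Z.card = 3 := by
    rw [hZdef, Finset.card_erase_of_mem hyNx]
    have : Nx.card = 4 := hdx
    omega
  have hZne : Z.Nonempty := Finset.card_pos.mp (by omega)
  have hZadj : ∀ z ∈ Z, G.Adj x z := fun z hz =>
    (Finset.mem_filter.mp (Finset.mem_of_mem_erase hz)).2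
  have hZney : ∀ z ∈ Z, z ≠ y := fun z hz => Finset.ne_of_mem_erase hz
  -- distance facts
  have hdz : ∀ z ∈ Z, 2 ≤ G.dist z y := by
    intro z hz
    refine two_le_dist_of hconn (hZney z hz) fun hadj => ?_
    exact hno z (hZadj z hz) hadj.symm
  set dZ : V → ℕ := fun v => Z.inf' hZne (fun z => G.dist z v) with hdZdef
  set F : V → ℝ := fun v => min (G.dist x v : ℝ) ((dZ v : ℝ) - 1) with hFdef
  have hdistxz : ∀ z ∈ Z, G.dist z x = 1 := fun z hz =>
    SimpleGraph.dist_eq_one_iff_adj.mpr (hZadj z hz).symm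
  have hFx : F x = 0 := by
    have h1 : dZ x = 1 := by
      obtain ⟨z₀, hz₀⟩ := hZne
      refine le_antisymm ?_ ?_
      · exact le_trans (Finset.inf'_le _ hz₀) (le_of_eq (hdistxz z₀ hz₀))
      · exact Finset.le_inf' _ _ fun z hz => le_of_eq (hdistxz z hz).symm
    simp [hFdef, h1, SimpleGraph.dist_self]
  have hFy : F y = 1 := by
    have h1 : G.dist x y = 1 := SimpleGraph.dist_eq_one_iff_adj.mpr hxy
    have h2 : 2 ≤ dZ y := Finset.le_inf' _ _ fun z hz => hdz z hz
    have h2' : (2 : ℝ) ≤ (dZ y : ℝ) := by exact_mod_cast h2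
    rw [hFdef]
    simp only [h1]
    rw [min_eq_left (by push_cast; linarith)]
    norm_num
  have hFz : ∀ z ∈ Z, F z = -1 := by
    intro z hz
    have h0 : dZ z = 0 := Nat.le_antisymm
      (le_trans (Finset.inf'_le _ hz) (le_of_eq (SimpleGraph.dist_self))) (Nat.zero_le _)
    have h1 : G.dist x z = 1 := SimpleGraph.dist_eq_one_iff_adj.mpr (hZadj z hz)
    rw [hFdef]
    simp only [h0, h1]
    norm_num
  have hFw : ∀ w : V, G.Adj y w → w ≠ x → 1 ≤ F w := by
    intro w hyw hwx
    have hnxw : ¬ G.Adj x w := fun h => hno w h hyw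
    have h1 : 2 ≤ G.dist x w := two_le_dist_of hconn (Ne.symm hwx) hnxw
    have h2 : 2 ≤ dZ w := by
      refine Finset.le_inf' _ _ fun z hz => ?_
      have hzx : G.Adj x z := hZadj z hz
      have hzw : z ≠ w := fun h => hnxw (h ▸ hzx)
      have hnadj : ¬ G.Adj z w := fun hadj =>
        h4 x z w y hzx.ne hzw hyw.ne' hxy.ne' (Ne.symm hwx) (hZney z hz)
          ⟨hzx, hadj, hyw.symm, hxy.symm⟩
      exact two_le_dist_of hconn hzw hnadj
    have h1' : (2 : ℝ) ≤ (G.dist x w : ℝ) := by exact_mod_cast h1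
    have h2' : (2 : ℝ) ≤ (dZ w : ℝ) := by exact_mod_cast h2
    rw [hFdef]
    exact le_min (by linarith) (by linarith)
  -- F is 1-Lipschitz
  have hkey : ∀ a b : V, F a ≤ F b + (G.dist a b : ℝ) := by
    intro a b
    have hx' : G.dist x a ≤ G.dist x b + G.dist a b := by
      have h := hconn.dist_triangle (u := x) (v := b) (w := a)
      have hc : G.dist b a = G.dist a b := SimpleGraph.dist_comm
      omega
    have hx : (G.dist x a : ℝ) ≤ (G.dist x b : ℝ) + (G.dist a b : ℝ) := by exact_mod_cast hx'
    have hz : (dZ a : ℝ) ≤ (dZ b : ℝ) + (G.dist a b : ℝ) := by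
      obtain ⟨z₀, hz₀, hz₀e⟩ := Finset.exists_mem_eq_inf' hZne (fun z => G.dist z b)
      have h1 : dZ a ≤ G.dist z₀ a := Finset.inf'_le _ hz₀
      have h2 : G.dist z₀ a ≤ G.dist z₀ b + G.dist a b := by
        have h := hconn.dist_triangle (u := z₀) (v := b) (w := a)
        have hc : G.dist b a = G.dist a b := SimpleGraph.dist_comm
        omega
      have hb : dZ b = G.dist z₀ b := hz₀e
      have h3 : dZ a ≤ dZ b + G.dist a b := by omega
      exact_mod_cast h3
    calc F a ≤ min ((G.dist x b : ℝ) + (G.dist a b : ℝ)) (((dZ b : ℝ) - 1) + (G.dist a b : ℝ)) :=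
          min_le_min hx (by linarith)
      _ = F b + (G.dist a b : ℝ) := by rw [min_add_add_right]
  have hLip : Lip1 G F := by
    intro u v
    rw [abs_sub_le_iff]
    constructor
    · linarith [hkey u v]
    · have := hkey v u
      have hc : G.dist v u = G.dist u v := SimpleGraph.dist_comm
      rw [hc] at this
      linarith
  -- Laplacian at x
  have hlapx : lap G F x = -(1/2 : ℝ) := by
    rw [lap, ← hNxdef, (Finset.insert_erase hyNx).symm, ← hZdef,
      Finset.sum_insert (hZdef ▸ Finset.notMem_erase y Nx)]
    have hsz : ∑ z ∈ Z, (F z - F x) = -3 := by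
      rw [Finset.sum_congr rfl (fun z hz => by rw [hFz z hz, hFx]; norm_num : ∀ z ∈ Z, F z - F x = -1)]
      rw [Finset.sum_const, hZcard]
      norm_num
    rw [hsz, hFx, hFy, hdx]
    norm_num
  -- Laplacian at y
  have hdy2 : (2 : ℝ) ≤ (deg G y : ℝ) := by exact_mod_cast hmin y
  have hdy : (0:ℝ) < (deg G y : ℝ) := by linarith
  have hxNy : x ∈ Finset.univ.filter (fun z => G.Adj y z) := by simp [hxy.symm]
  have hlapy : -((deg G y : ℝ))⁻¹ ≤ lap G F y := by
    rw [lap, (Finset.insert_erase hxNy).symm,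
      Finset.sum_insert (Finset.notMem_erase x _)]
    have hsum2 : 0 ≤ ∑ w ∈ (Finset.univ.filter (fun z => G.Adj y z)).erase x, (F w - F y) := by
      refine Finset.sum_nonneg fun w hw => ?_
      have hw1 : G.Adj y w := (Finset.mem_filter.mp (Finset.mem_of_mem_erase hw)).2
      have hw2 : w ≠ x := Finset.ne_of_mem_erase hw
      have := hFw w hw1 hw2
      rw [hFy]; linarith
    have hstep : -(1:ℝ) ≤ (F x - F y) + ∑ w ∈ (Finset.univ.filter (fun z => G.Adj y z)).erase x, (F w - F y) := by
      have h1 : F x - F y = -1 := by rw [hFx, hFy]; norm_num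
      linarith
    calc -((deg G y : ℝ))⁻¹ = ((deg G y : ℝ))⁻¹ * (-1) := by ring
      _ ≤ ((deg G y : ℝ))⁻¹ * ((F x - F y) + ∑ w ∈ (Finset.univ.filter (fun z => G.Adj y z)).erase x, (F w - F y)) :=
          mul_le_mul_of_nonneg_left hstep (by positivity)
  -- curvature bound
  have hinv : ((deg G y : ℝ))⁻¹ ≤ 1/2 := by
    rw [inv_eq_one_div, div_le_div_iff₀ hdy (by norm_num)]; linarith
  have hr0 : lap G F x - lap G F y ≤ 0 := by
    rw [hlapx]; linarith
  have hmem : (lap G F x - lap G F y) ∈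
      {r : ℝ | ∃ f : V → ℝ, Lip1 G f ∧ f y - f x = 1 ∧ r = lap G f x - lap G f y} :=
    ⟨F, hLip, by rw [hFx, hFy]; ring, rfl⟩
  have hbdd : BddBelow {r : ℝ | ∃ f : V → ℝ, Lip1 G f ∧ f y - f x = 1 ∧ r = lap G f x - lap G f y} := by
    refine ⟨-2, fun r hr => ?_⟩
    obtain ⟨f, hf, -, rfl⟩ := hr
    have h1 := abs_le.mp (lap_abs_le hf x)
    have h2 := abs_le.mp (lap_abs_le hf y)
    linarith [h1.1, h2.2]
  have hk : kappa G x y ≤ lap G F x - lap G F y := csInf_le hbdd hmem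
  have hp := hpos x y hxy
  linarith

theorem stmt14 [Fintype V] (G : SimpleGraph V) (hconn : G.Connected)
    (h4 : C4Free G) (hpos : PosLLY G)
    (hmin : ∀ v : V, 2 ≤ deg G v) (hmax : maxDeg G = 4) :
    ∃ c a₁ a₂ b₁ b₂ : V, c ≠ a₁ ∧ c ≠ a₂ ∧ c ≠ b₁ ∧ c ≠ b₂ ∧
      a₁ ≠ a₂ ∧ a₁ ≠ b₁ ∧ a₁ ≠ b₂ ∧ a₂ ≠ b₁ ∧ a₂ ≠ b₂ ∧ b₁ ≠ b₂ ∧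
      G.Adj c a₁ ∧ G.Adj c a₂ ∧ G.Adj a₁ a₂ ∧
      G.Adj c b₁ ∧ G.Adj c b₂ ∧ G.Adj b₁ b₂ := by
  have hne : Nonempty V := hconn.nonempty
  obtain ⟨x, -, hx⟩ := Finset.exists_mem_eq_sup (Finset.univ : Finset V)
    Finset.univ_nonempty (deg G)
  have hdx : deg G x = 4 := by
    have h := hmax
    rw [maxDeg, hx] at h
    exact h
  set Nx : Finset V := Finset.univ.filter (fun z => G.Adj x z) with hNxdef
  have hcard : Nx.card = 4 := hdx
  have hadjNx : ∀ n ∈ Nx, G.Adj x n := fun n hn => (Finset.mem_filter.mp hn).2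
  have hpath : ∀ a ∈ Nx, ∀ b ∈ Nx, ∀ c ∈ Nx, a ≠ c → G.Adj a b → ¬ G.Adj b c := by
    intro a ha b hb c hc hac hab hbc
    exact h4 x a b c (hadjNx a ha).ne hab.ne hbc.ne (hadjNx c hc).ne' (hadjNx b hb).ne hac
      ⟨hadjNx a ha, hab, hbc, (hadjNx c hc).symm⟩
  have hpartner : ∀ n ∈ Nx, ∃ m ∈ Nx, m ≠ n ∧ G.Adj n m := by
    intro n hn
    obtain ⟨m, hxm, hnm⟩ := triangle_of_deg4 hconn h4 hpos hmin (hadjNx n hn) hdx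
    exact ⟨m, by simp [hNxdef, hxm], hnm.ne', hnm⟩
  obtain ⟨n1, hn1⟩ := Finset.card_pos.mp (by omega : 0 < Nx.card)
  obtain ⟨m1, hm1Nx, hm1ne, hadj1⟩ := hpartner n1 hn1
  set R : Finset V := Nx \ {n1, m1} with hRdef
  have hsub : ({n1, m1} : Finset V) ⊆ Nx := by
    intro v hv
    rcases Finset.mem_insert.mp hv with rfl | hv
    · exact hn1
    · rcases Finset.mem_singleton.mp hv with rfl
      exact hm1Nx
  have hRcard : R.card = 2 := by
    rw [hRdef, Finset.card_sdiff_of_subset hsub, Finset.card_pair (Ne.symm hm1ne)]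
    omega
  obtain ⟨n2, n3, hne23, hR⟩ := Finset.card_eq_two.mp hRcard
  have hn2R : n2 ∈ R := by rw [hR]; simp
  have hn3R : n3 ∈ R := by rw [hR]; simp
  have hmemR : ∀ v ∈ R, v ∈ Nx ∧ v ≠ n1 ∧ v ≠ m1 := by
    intro v hv
    rw [hRdef, Finset.mem_sdiff] at hv
    simp only [Finset.mem_insert, Finset.mem_singleton] at hv
    exact ⟨hv.1, fun h => hv.2 (Or.inl h), fun h => hv.2 (Or.inr h)⟩
  obtain ⟨hn2Nx, hn2n1, hn2m1⟩ := hmemR n2 hn2R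
  obtain ⟨hn3Nx, hn3n1, hn3m1⟩ := hmemR n3 hn3R
  obtain ⟨m2, hm2Nx, hm2ne, hadj2⟩ := hpartner n2 hn2Nx
  have hm2n1 : m2 ≠ n1 := fun h => hpath n2 hn2Nx n1 hn1 m1 hm1Nx hn2m1 (h ▸ hadj2) hadj1
  have hm2m1 : m2 ≠ m1 := fun h => hpath n2 hn2Nx m1 hm1Nx n1 hn1 hn2n1 (h ▸ hadj2) hadj1.symm
  have hm2R : m2 ∈ R := by
    rw [hRdef, Finset.mem_sdiff]
    simp only [Finset.mem_insert, Finset.mem_singleton]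
    exact ⟨hm2Nx, fun h => h.elim hm2n1 hm2m1⟩
  have hm2 : m2 = n3 := by
    rw [hR] at hm2R
    rcases Finset.mem_insert.mp hm2R with h | h
    · exact absurd h hm2ne
    · exact Finset.mem_singleton.mp h
  refine ⟨x, n1, m1, n2, n3, (hadjNx n1 hn1).ne, (hadjNx m1 hm1Nx).ne,
    (hadjNx n2 hn2Nx).ne, (hadjNx n3 hn3Nx).ne, Ne.symm hm1ne, Ne.symm hn2n1,
    Ne.symm hn3n1, Ne.symm hn2m1, Ne.symm hn3m1, hne23,
    hadjNx n1 hn1, hadjNx m1 hm1Nx, hadj1,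
    hadjNx n2 hn2Nx, hadjNx n3 hn3Nx, hm2 ▸ hadj2⟩
end
end

section
/- Let G be a simple connected C4-free positively LLY-curved graph with minimum degree at least 2 and maximum degree 6. Then G is isomorphic to the friendship graph F_3. -/
open Finset

noncomputable section
open scoped Classical

variable {V : Type*}

-- edge-Lipschitz implies Lip1
lemma lip_of_edge (G : SimpleGraph V) (hconn : G.Connected) (f : V → ℝ)
    (h : ∀ u v : V, G.Adj u v → |f u - f v| ≤ 1) : Lip1 G f := by
  intro u v
  obtain ⟨p, hp⟩ := hconn.exists_walk_length_eq_dist u v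
  rw [← hp]
  clear hp
  induction p with
  | nil => simp
  | cons hadj q ih =>
      rename_i a b c
      calc |f a - f c| ≤ |f a - f b| + |f b - f c| := abs_sub_le _ _ _
      _ ≤ 1 + q.length := add_le_add (h _ _ hadj) ih
      _ = ((SimpleGraph.Walk.cons hadj q).length : ℝ) := by
          simp [SimpleGraph.Walk.length_cons]; ring

-- McShane extension
lemma mcshane (G : SimpleGraph V) (hconn : G.Connected) [Fintype V]
    (S : Finset V) (hS : S.Nonempty) (g : V → ℝ)
    (hg : ∀ a ∈ S, ∀ b ∈ S, g a - g b ≤ (G.dist a b : ℝ)) :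
    ∃ F : V → ℝ, Lip1 G F ∧ ∀ a ∈ S, F a = g a := by
  refine ⟨fun v => S.sup' hS (fun a => g a - (G.dist a v : ℝ)), ?_, ?_⟩
  · apply lip_of_edge G hconn
    intro u v huv
    have key : ∀ u v : V, G.Adj u v →
        S.sup' hS (fun a => g a - (G.dist a u : ℝ))
          - S.sup' hS (fun a => g a - (G.dist a v : ℝ)) ≤ 1 := by
      intro u v huv
      rw [sub_le_iff_le_add]
      apply Finset.sup'_le
      intro a ha
      have h1 : (G.dist a v : ℝ) ≤ G.dist a u + 1 := by
        have := hconn.dist_triangle (u := a) (v := u) (w := v)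
        have hd : G.dist u v = 1 := SimpleGraph.dist_eq_one_iff_adj.mpr huv
        rw [hd] at this
        exact_mod_cast this
      have h2 : g a - (G.dist a v : ℝ) ≤ S.sup' hS (fun a => g a - (G.dist a v : ℝ)) :=
        Finset.le_sup' (fun a => g a - (G.dist a v : ℝ)) ha
      linarith
    rw [abs_sub_le_iff]
    exact ⟨key u v huv, key v u huv.symm⟩
  · intro a ha
    apply le_antisymm
    · apply Finset.sup'_le
      intro b hb
      have := hg b hb a ha
      linarith
    · have := Finset.le_sup' (fun b => g b - (G.dist b a : ℝ)) ha
      simp only [SimpleGraph.dist_self, Nat.cast_zero, sub_zero] at this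
      exact this

-- kappa is at most the value of any admissible test function
lemma kappa_le [Fintype V] (G : SimpleGraph V) (hmin : ∀ v : V, 2 ≤ deg G v)
    (x y : V) (f : V → ℝ) (hf : Lip1 G f) (hfy : f y - f x = 1) :
    kappa G x y ≤ lap G f x - lap G f y := by
  apply csInf_le
  · refine ⟨-2, ?_⟩
    rintro r ⟨f', hf', -, rfl⟩
    have hl : ∀ v : V, |lap G f' v| ≤ 1 := by
      intro v
      have hdp : (0:ℝ) < (deg G v : ℝ) := by
        have := hmin v; positivity
      rw [lap, abs_mul, abs_inv, abs_of_pos hdp]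
      rw [inv_mul_le_iff₀ hdp, mul_one]
      calc |∑ z ∈ Finset.univ.filter (fun z => G.Adj v z), (f' z - f' v)|
          ≤ ∑ z ∈ Finset.univ.filter (fun z => G.Adj v z), |f' z - f' v| :=
            Finset.abs_sum_le_sum_abs _ _
        _ ≤ ∑ z ∈ Finset.univ.filter (fun z => G.Adj v z), 1 := by
            apply Finset.sum_le_sum
            intro z hz
            have hadj : G.Adj v z := by simpa using hz
            have := hf' z v
            have hd : G.dist z v = 1 := SimpleGraph.dist_eq_one_iff_adj.mpr hadj.symm
            rw [hd] at this; simpa using this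
        _ = (deg G v : ℝ) := by simp [deg]
    have h1 := hl x; have h2 := hl y
    rw [abs_le] at h1 h2
    linarith
  · exact ⟨f, hf, hfy, rfl⟩

-- master lemma: every admissible test function has positive value
lemma testpos [Fintype V] (G : SimpleGraph V) (hpos : PosLLY G)
    (hmin : ∀ v : V, 2 ≤ deg G v) {x y : V} (hxy : G.Adj x y)
    (f : V → ℝ) (hf : Lip1 G f) (hfy : f y - f x = 1) :
    0 < lap G f x - lap G f y :=
  lt_of_lt_of_le (hpos x y hxy) (kappa_le G hmin x y f hf hfy)

-- unique common neighbour
lemma uniqueCN (G : SimpleGraph V) (h4 : C4Free G) {x y z z' : V} (hxy : x ≠ y)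
    (h1 : G.Adj x z) (h2 : G.Adj y z) (h3 : G.Adj x z') (h4' : G.Adj y z') : z = z' := by
  by_contra hne
  exact h4 x z y z' h1.ne h2.ne.symm h4'.ne h3.ne.symm hxy hne
    ⟨h1, h2.symm, h4', h3.symm⟩

lemma claimA [Fintype V] (G : SimpleGraph V) (hconn : G.Connected) (h4 : C4Free G)
    (hpos : PosLLY G) (hmin : ∀ v : V, 2 ≤ deg G v) {c a : V}
    (hc : deg G c = 6) (hca : G.Adj c a) :
    ∃ m : V, G.Adj c m ∧ G.Adj a m := by
  by_contra hm
  push_neg at hm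
  classical
  set g : V → ℝ := fun v => if v = c then 0 else if v = a then 1 else
    if G.Adj c v then -1 else 1 with hg
  set S : Finset V := univ.filter (fun v => v = c ∨ v = a ∨ G.Adj c v ∨ G.Adj a v) with hSdef
  have hcS : c ∈ S := by simp [hSdef]
  have haS : a ∈ S := by simp [hSdef]
  have hgc : g c = 0 := by simp [hg]
  have hga : g a = 1 := by simp [hg, hca.ne']
  have hgz : ∀ z, G.Adj c z → z ≠ a → g z = -1 := by
    intro z hz hza
    simp [hg, hz.ne', hza, hz]
  have hgw : ∀ w, G.Adj a w → w ≠ c → g w = 1 := by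
    intro w hw hwc
    have hncw : ¬ G.Adj c w := fun h => hm w h hw
    simp [hg, hwc, hw.ne', hncw]
  -- classification of anchor vertices
  have hclass : ∀ u ∈ S, u = c ∨
      (u ≠ c ∧ g u = 1 ∧ (u = a ∨ (G.Adj a u ∧ ¬ G.Adj c u))) ∨
      (u ≠ c ∧ u ≠ a ∧ g u = -1 ∧ G.Adj c u) := by
    intro u hu
    rw [hSdef, Finset.mem_filter] at hu
    rcases hu.2 with rfl | rfl | h | h
    · exact Or.inl rfl
    · exact Or.inr (Or.inl ⟨hca.ne', hga, Or.inl rfl⟩)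
    · rcases eq_or_ne u a with rfl | hua
      · exact Or.inr (Or.inl ⟨hca.ne', hga, Or.inl rfl⟩)
      · exact Or.inr (Or.inr ⟨h.ne', hua, hgz u h hua, h⟩)
    · rcases eq_or_ne u c with rfl | huc
      · exact Or.inl rfl
      · rcases eq_or_ne u a with rfl | hua
        · exact Or.inr (Or.inl ⟨hca.ne', hga, Or.inl rfl⟩)
        · have hncu : ¬ G.Adj c u := fun h' => hm u h' h
          exact Or.inr (Or.inl ⟨huc, hgw u h huc, Or.inr ⟨h, hncu⟩⟩)
  have hanch : ∀ u ∈ S, ∀ v ∈ S, g u - g v ≤ (G.dist u v : ℝ) := by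
    intro u hu v hv
    have hd0 : (0:ℝ) ≤ (G.dist u v : ℝ) := Nat.cast_nonneg _
    rcases hclass u hu with hueq | ⟨huc, hgu, hukind⟩ | ⟨huc, hua, hgu, hadjcu⟩
    · -- g u = 0
      have hgu : g u = 0 := by rw [hueq, hgc]
      rcases hclass v hv with hveq | ⟨hvc, hgv, _⟩ | ⟨hvc, hva, hgv, hadjcv⟩
      · have hgv : g v = 0 := by rw [hveq, hgc]
        rw [hgu, hgv]; linarith
      · rw [hgu, hgv]; linarith
      · rw [hgu, hgv]
        have hadj : G.Adj u v := by rw [hueq]; exact hadjcv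
        have : G.dist u v = 1 := SimpleGraph.dist_eq_one_iff_adj.mpr hadj
        rw [this]; norm_num
    · -- g u = 1
      rcases hclass v hv with hveq | ⟨hvc, hgv, _⟩ | ⟨hvc, hva, hgv, hadjcv⟩
      · have hgv : g v = 0 := by rw [hveq, hgc]
        rw [hgu, hgv]
        have hne : u ≠ v := by rw [hveq]; exact huc
        have : 1 ≤ G.dist u v := hconn.pos_dist_of_ne hne
        have : (1:ℝ) ≤ (G.dist u v : ℝ) := by exact_mod_cast this
        linarith
      · rw [hgu, hgv]; linarith
      · -- the crucial case : gap 2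
        rw [hgu, hgv]
        have hne : u ≠ v := by
          rintro rfl
          rcases hukind with hne' | ⟨_, hnc⟩
          · exact hva hne'
          · exact hnc hadjcv
        have hnadj : ¬ G.Adj u v := by
          intro hadj
          rcases hukind with hua' | ⟨hau, hnc⟩
          · -- u = a adjacent to v, and c adjacent to v : common neighbour
            exact hm v hadjcv (by rw [hua'] at hadj; exact hadj)
          · -- C4 : c - v - u - a - c
            exact h4 c v u a hadjcv.ne hne.symm hau.ne' hca.ne' huc.symm hva
              ⟨hadjcv, hadj.symm, hau.symm, hca.symm⟩
        have : 2 ≤ G.dist u v := two_le_dist G hconn hne hnadj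
        have : (2:ℝ) ≤ (G.dist u v : ℝ) := by exact_mod_cast this
        linarith
    · -- g u = -1
      rcases hclass v hv with hveq | ⟨hvc, hgv, _⟩ | ⟨hvc, hva, hgv, hadjcv⟩
      · have hgv : g v = 0 := by rw [hveq, hgc]
        rw [hgu, hgv]; linarith
      · rw [hgu, hgv]; linarith
      · rw [hgu, hgv]; linarith
  obtain ⟨F, hF, hFeq⟩ := mcshane G hconn S ⟨c, hcS⟩ g hanch
  have hFc : F c = 0 := by rw [hFeq c hcS, hgc]
  have hFa : F a = 1 := by rw [hFeq a haS, hga]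
  have hkey := testpos G hpos hmin hca F hF (by rw [hFa, hFc]; ring)
  -- compute lap at c
  have hNc : ∀ z ∈ univ.filter (fun z => G.Adj c z), F z - F c = -1 + (if z = a then (2:ℝ) else 0) := by
    intro z hz
    have hadj : G.Adj c z := by simpa using hz
    have hzS : z ∈ S := by simp [hSdef, hadj]
    rw [hFeq z hzS, hFc]
    rcases eq_or_ne z a with rfl | hza
    · rw [hga]; norm_num
    · rw [hgz z hadj hza]; simp [hza]
  have hsumc : ∑ z ∈ univ.filter (fun z => G.Adj c z), (F z - F c) = -4 := by
    rw [Finset.sum_congr rfl hNc, Finset.sum_add_distrib, Finset.sum_const,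
      Finset.sum_ite_eq' _ a (fun _ => (2:ℝ))]
    have hmem : a ∈ univ.filter (fun z => G.Adj c z) := by simp [hca]
    have hcard : (univ.filter (fun z => G.Adj c z)).card = 6 := hc
    rw [if_pos hmem, hcard]
    norm_num
  have hlapc : lap G F c = -(2/3) := by
    rw [lap, hsumc, hc]
    norm_num
  -- compute lap at a
  have hNa : ∀ w ∈ univ.filter (fun w => G.Adj a w), F w - F a = (if w = c then (-1:ℝ) else 0) := by
    intro w hw
    have hadj : G.Adj a w := by simpa using hw
    have hwS : w ∈ S := by simp [hSdef, hadj]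
    rw [hFeq w hwS, hFa]
    rcases eq_or_ne w c with rfl | hwc
    · rw [hgc]; norm_num
    · rw [hgw w hadj hwc]; simp [hwc]
  have hsuma : ∑ w ∈ univ.filter (fun w => G.Adj a w), (F w - F a) = -1 := by
    rw [Finset.sum_congr rfl hNa, Finset.sum_ite_eq' _ c (fun _ => (-1:ℝ))]
    have hmem : c ∈ univ.filter (fun w => G.Adj a w) := by simp [hca.symm]
    rw [if_pos hmem]
  have hlapa : lap G F a = -((deg G a : ℝ)⁻¹) := by
    rw [lap, hsuma]
    ring
  rw [hlapc, hlapa] at hkey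
  have hda : 2 ≤ deg G a := hmin a
  have hda' : (2:ℝ) ≤ (deg G a : ℝ) := by exact_mod_cast hda
  have hinv : (deg G a : ℝ)⁻¹ ≤ 1/2 := by
    rw [inv_le_comm₀ (by linarith) (by norm_num)]
    simpa using hda'
  linarith

lemma claimB [Fintype V] (G : SimpleGraph V) (hconn : G.Connected) (h4 : C4Free G)
    (hpos : PosLLY G) (hmin : ∀ v : V, 2 ≤ deg G v) {c a m : V}
    (hc : deg G c = 6) (hca : G.Adj c a) (hcm : G.Adj c m) (ham : G.Adj a m) :
    deg G a = 2 := by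
  classical
  have ham' : a ≠ m := ham.ne
  -- common neighbours of c and a are equal to m
  have hCNa : ∀ z, G.Adj c z → G.Adj a z → z = m :=
    fun z h1 h2 => uniqueCN G h4 hca.ne h1 h2 hcm ham
  -- common neighbours of c and m are equal to a
  have hCNm : ∀ z, G.Adj c z → G.Adj m z → z = a :=
    fun z h1 h2 => uniqueCN G h4 hcm.ne h1 h2 hca ham.symm
  set g : V → ℝ := fun v => if v = c then 0 else if v = a then 1 else if v = m then 1 else
    if G.Adj c v then -1 else 1 with hg
  set S : Finset V := univ.filter
    (fun v => v = c ∨ v = a ∨ v = m ∨ G.Adj c v ∨ G.Adj a v) with hSdef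
  have hcS : c ∈ S := by simp [hSdef]
  have haS : a ∈ S := by simp [hSdef]
  have hgc : g c = 0 := by simp [hg]
  have hga : g a = 1 := by simp [hg, hca.ne']
  have hgm : g m = 1 := by simp [hg, hcm.ne', ham'.symm]
  have hgz : ∀ z, G.Adj c z → z ≠ a → z ≠ m → g z = -1 := by
    intro z hz hza hzm
    simp [hg, hz.ne', hza, hzm, hz]
  have hgw : ∀ w, G.Adj a w → w ≠ c → w ≠ m → g w = 1 := by
    intro w hw hwc hwm
    have hncw : ¬ G.Adj c w := fun h => hwm (hCNa w h hw)
    simp [hg, hwc, hw.ne', hwm, hncw]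
  have hclass : ∀ u ∈ S, u = c ∨
      (u ≠ c ∧ g u = 1 ∧ (u = a ∨ u = m ∨ (G.Adj a u ∧ ¬ G.Adj c u))) ∨
      (u ≠ c ∧ u ≠ a ∧ u ≠ m ∧ g u = -1 ∧ G.Adj c u) := by
    intro u hu
    rw [hSdef, Finset.mem_filter] at hu
    have main : ∀ u, u ≠ c → u ≠ a → u ≠ m → G.Adj c u ∨ G.Adj a u →
        (g u = 1 ∧ G.Adj a u ∧ ¬ G.Adj c u) ∨ (g u = -1 ∧ G.Adj c u) := by
      intro u huc hua hum h
      by_cases hcu : G.Adj c u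
      · exact Or.inr ⟨hgz u hcu hua hum, hcu⟩
      · have hau : G.Adj a u := by tauto
        exact Or.inl ⟨hgw u hau huc hum, hau, hcu⟩
    rcases eq_or_ne u c with huc | huc
    · exact Or.inl huc
    rcases eq_or_ne u a with hua | hua
    · exact Or.inr (Or.inl ⟨huc, by rw [hua, hga], Or.inl hua⟩)
    rcases eq_or_ne u m with hum | hum
    · exact Or.inr (Or.inl ⟨huc, by rw [hum, hgm], Or.inr (Or.inl hum)⟩)
    have h' : G.Adj c u ∨ G.Adj a u := by
      rcases hu.2 with h | h | h | h | h
      · exact absurd h huc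
      · exact absurd h hua
      · exact absurd h hum
      · exact Or.inl h
      · exact Or.inr h
    rcases main u huc hua hum h' with ⟨h1, h2, h3⟩ | ⟨h1, h2⟩
    · exact Or.inr (Or.inl ⟨huc, h1, Or.inr (Or.inr ⟨h2, h3⟩)⟩)
    · exact Or.inr (Or.inr ⟨huc, hua, hum, h1, h2⟩)
  have hanch : ∀ u ∈ S, ∀ v ∈ S, g u - g v ≤ (G.dist u v : ℝ) := by
    intro u hu v hv
    have hd0 : (0:ℝ) ≤ (G.dist u v : ℝ) := Nat.cast_nonneg _
    rcases hclass u hu with hueq | ⟨huc, hgu, hukind⟩ | ⟨huc, hua, hum, hgu, hadjcu⟩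
    · have hgu : g u = 0 := by rw [hueq, hgc]
      rcases hclass v hv with hveq | ⟨hvc, hgv, _⟩ | ⟨hvc, hva, hvm, hgv, hadjcv⟩
      · have hgv : g v = 0 := by rw [hveq, hgc]
        rw [hgu, hgv]; linarith
      · rw [hgu, hgv]; linarith
      · rw [hgu, hgv]
        have hadj : G.Adj u v := by rw [hueq]; exact hadjcv
        have : G.dist u v = 1 := SimpleGraph.dist_eq_one_iff_adj.mpr hadj
        rw [this]; norm_num
    · rcases hclass v hv with hveq | ⟨hvc, hgv, _⟩ | ⟨hvc, hva, hvm, hgv, hadjcv⟩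
      · have hgv : g v = 0 := by rw [hveq, hgc]
        rw [hgu, hgv]
        have hne : u ≠ v := by rw [hveq]; exact huc
        have : 1 ≤ G.dist u v := hconn.pos_dist_of_ne hne
        have : (1:ℝ) ≤ (G.dist u v : ℝ) := by exact_mod_cast this
        linarith
      · rw [hgu, hgv]; linarith
      · -- gap 2 case
        rw [hgu, hgv]
        have hne : u ≠ v := by
          rintro rfl
          rcases hukind with h | h | ⟨_, hnc⟩
          · exact hva h
          · exact hvm h
          · exact hnc hadjcv
        have hnadj : ¬ G.Adj u v := by
          intro hadj
          rcases hukind with hua' | hum' | ⟨hau, hnc⟩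
          · -- u = a : v common neighbour of c,a hence v = m, contradiction
            exact hvm (hCNa v hadjcv (by rw [hua'] at hadj; exact hadj))
          · -- u = m : v common neighbour of c,m hence v = a, contradiction
            exact hva (hCNm v hadjcv (by rw [hum'] at hadj; exact hadj))
          · -- C4 : c - v - u - a - c
            exact h4 c v u a hadjcv.ne hne.symm hau.ne' hca.ne' huc.symm hva
              ⟨hadjcv, hadj.symm, hau.symm, hca.symm⟩
        have : 2 ≤ G.dist u v := two_le_dist G hconn hne hnadj
        have : (2:ℝ) ≤ (G.dist u v : ℝ) := by exact_mod_cast this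
        linarith
    · rcases hclass v hv with hveq | ⟨hvc, hgv, _⟩ | ⟨hvc, hva, hvm, hgv, hadjcv⟩
      · have hgv : g v = 0 := by rw [hveq, hgc]
        rw [hgu, hgv]; linarith
      · rw [hgu, hgv]; linarith
      · rw [hgu, hgv]; linarith
  obtain ⟨F, hF, hFeq⟩ := mcshane G hconn S ⟨c, hcS⟩ g hanch
  have hFc : F c = 0 := by rw [hFeq c hcS, hgc]
  have hFa : F a = 1 := by rw [hFeq a haS, hga]
  have hkey := testpos G hpos hmin hca F hF (by rw [hFa, hFc]; ring)
  -- lap at c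
  have hNc : ∀ z ∈ univ.filter (fun z => G.Adj c z),
      F z - F c = -1 + ((if z = a then (2:ℝ) else 0) + (if z = m then (2:ℝ) else 0)) := by
    intro z hz
    have hadj : G.Adj c z := by simpa using hz
    have hzS : z ∈ S := by simp [hSdef, hadj]
    rw [hFeq z hzS, hFc]
    rcases eq_or_ne z a with rfl | hza
    · rw [hga, if_pos rfl, if_neg ham']; norm_num
    · rcases eq_or_ne z m with rfl | hzm
      · rw [hgm, if_neg hza, if_pos rfl]; norm_num
      · rw [hgz z hadj hza hzm, if_neg hza, if_neg hzm]; norm_num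
  have hsumc : ∑ z ∈ univ.filter (fun z => G.Adj c z), (F z - F c) = -2 := by
    rw [Finset.sum_congr rfl hNc, Finset.sum_add_distrib, Finset.sum_const,
      Finset.sum_add_distrib, Finset.sum_ite_eq' _ a (fun _ => (2:ℝ)),
      Finset.sum_ite_eq' _ m (fun _ => (2:ℝ))]
    have hmema : a ∈ univ.filter (fun z => G.Adj c z) := by simp [hca]
    have hmemm : m ∈ univ.filter (fun z => G.Adj c z) := by simp [hcm]
    have hcard : (univ.filter (fun z => G.Adj c z)).card = 6 := hc
    rw [if_pos hmema, if_pos hmemm, hcard]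
    norm_num
  have hlapc : lap G F c = -(1/3) := by
    rw [lap, hsumc, hc]
    norm_num
  -- lap at a
  have hNa : ∀ w ∈ univ.filter (fun w => G.Adj a w), F w - F a = (if w = c then (-1:ℝ) else 0) := by
    intro w hw
    have hadj : G.Adj a w := by simpa using hw
    have hwS : w ∈ S := by simp [hSdef, hadj]
    rw [hFeq w hwS, hFa]
    rcases eq_or_ne w c with rfl | hwc
    · rw [hgc]; norm_num
    · rcases eq_or_ne w m with rfl | hwm
      · rw [hgm, if_neg hwc]; norm_num
      · rw [hgw w hadj hwc hwm, if_neg hwc]; norm_num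
  have hsuma : ∑ w ∈ univ.filter (fun w => G.Adj a w), (F w - F a) = -1 := by
    rw [Finset.sum_congr rfl hNa, Finset.sum_ite_eq' _ c (fun _ => (-1:ℝ))]
    have hmem : c ∈ univ.filter (fun w => G.Adj a w) := by simp [hca.symm]
    rw [if_pos hmem]
  have hlapa : lap G F a = -((deg G a : ℝ)⁻¹) := by
    rw [lap, hsuma]; ring
  rw [hlapc, hlapa] at hkey
  -- 0 < -(1/3) + 1/deg a  forces deg a < 3
  have hda2 : 2 ≤ deg G a := hmin a
  by_contra hne2
  have hda3 : 3 ≤ deg G a := by omega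
  have hda' : (3:ℝ) ≤ (deg G a : ℝ) := by exact_mod_cast hda3
  have hinv : (deg G a : ℝ)⁻¹ ≤ 1/3 := by
    rw [inv_le_comm₀ (by linarith) (by norm_num)]
    simpa using hda'
  linarith

lemma closure_lemma (G : SimpleGraph V) (hconn : G.Connected) {c : V} {P : V → V}
    (hP : ∀ u, G.Adj c u → G.Adj c (P u))
    (hN : ∀ u, G.Adj c u → ∀ v, G.Adj u v ↔ (v = c ∨ v = P u)) :
    ∀ v : V, v = c ∨ G.Adj c v := by
  have H : ∀ (u v : V) (w : G.Walk u v), (u = c ∨ G.Adj c u) → (v = c ∨ G.Adj c v) := by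
    intro u v w
    induction w with
    | nil => exact id
    | @cons x y z h p ih =>
        intro hu
        apply ih
        rcases hu with rfl | hu
        · exact Or.inr h
        · rcases (hN x hu y).mp h with rfl | rfl
          · exact Or.inl rfl
          · exact Or.inr (hP x hu)
  intro v
  exact (hconn c v).elim fun w => H c v w (Or.inl rfl)


theorem stmt15 [Fintype V] (G : SimpleGraph V) (hconn : G.Connected)
    (h4 : C4Free G) (hpos : PosLLY G)
    (hmin : ∀ v : V, 2 ≤ deg G v) (hmax : maxDeg G = 6) :
    Nonempty (G ≃g friendship 3) := by
  classical
  have hnemp : Nonempty V := hconn.nonempty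
  obtain ⟨c, -, hc⟩ := Finset.exists_mem_eq_sup (univ : Finset V) Finset.univ_nonempty (deg G)
  have hc6 : deg G c = 6 := by rw [← hc]; exact hmax
  have hA : ∀ a, G.Adj c a → ∃ m, G.Adj c m ∧ G.Adj a m :=
    fun a ha => claimA G hconn h4 hpos hmin hc6 ha
  set P : V → V := fun a => if h : G.Adj c a then (hA a h).choose else a with hPdef
  have hcP : ∀ a, G.Adj c a → G.Adj c (P a) := by
    intro a h
    simp only [hPdef, dif_pos h]
    exact (hA a h).choose_spec.1
  have haP : ∀ a, G.Adj c a → G.Adj a (P a) := by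
    intro a h
    simp only [hPdef, dif_pos h]
    exact (hA a h).choose_spec.2
  have hPuniq : ∀ a z, G.Adj c a → G.Adj c z → G.Adj a z → z = P a :=
    fun a z ha hz haz => uniqueCN G h4 ha.ne hz haz (hcP a ha) (haP a ha)
  have hPP : ∀ a, G.Adj c a → P (P a) = a := by
    intro a ha
    exact (hPuniq (P a) a (hcP a ha) ha (haP a ha).symm).symm
  have hPne : ∀ a, G.Adj c a → P a ≠ a := by
    intro a ha h
    have := haP a ha
    rw [h] at this
    exact G.irrefl this
  have hdeg2 : ∀ a, G.Adj c a → deg G a = 2 :=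
    fun a ha => claimB G hconn h4 hpos hmin hc6 ha (hcP a ha) (haP a ha)
  have hNa : ∀ a, G.Adj c a → ∀ v, G.Adj a v ↔ (v = c ∨ v = P a) := by
    intro a ha v
    constructor
    · intro hv
      have hsub : ({c, P a} : Finset V) ⊆ univ.filter (fun z => G.Adj a z) := by
        intro x hx
        simp only [Finset.mem_insert, Finset.mem_singleton] at hx
        rcases hx with rfl | rfl <;> simp [ha.symm, haP a ha]
      have hcard2 : ({c, P a} : Finset V).card = 2 := by
        rw [Finset.card_insert_of_notMem (by simp [(hcP a ha).ne]), Finset.card_singleton]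
      have hcardle : (univ.filter (fun z => G.Adj a z)).card ≤ ({c, P a} : Finset V).card := by
        rw [hcard2]
        exact le_of_eq (hdeg2 a ha)
      have heq := Finset.eq_of_subset_of_card_le hsub hcardle
      have hvmem : v ∈ univ.filter (fun z => G.Adj a z) := by simp [hv]
      rw [← heq] at hvmem
      simpa using hvmem
    · rintro (rfl | rfl)
      · exact ha.symm
      · exact haP a ha
  have hclo : ∀ v, v = c ∨ G.Adj c v := closure_lemma G hconn hcP hNa
  have hcross : ∀ u v, G.Adj c u → G.Adj c v → v ≠ P u → ¬ G.Adj u v := by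
    intro u v hu hv hne hadj
    rcases (hNa u hu v).mp hadj with rfl | rfl
    · exact G.irrefl hv
    · exact hne rfl
  -- choose the six neighbours of c
  set Nc : Finset V := univ.filter (fun z => G.Adj c z) with hNcdef
  have hNcc : Nc.card = 6 := hc6
  have hmemNc : ∀ v, v ∈ Nc ↔ G.Adj c v := by intro v; simp [hNcdef]
  obtain ⟨a1, ha1m⟩ : Nc.Nonempty := by rw [← Finset.card_pos, hNcc]; norm_num
  have ha1 : G.Adj c a1 := (hmemNc a1).mp ha1m
  have hb1 : G.Adj c (P a1) := hcP a1 ha1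
  have hb1ne : P a1 ≠ a1 := hPne a1 ha1
  obtain ⟨a2, ha2m⟩ : (Nc \ {a1, P a1}).Nonempty := by
    rw [← Finset.card_pos, Finset.card_sdiff_of_subset]
    · rw [hNcc, Finset.card_insert_of_notMem (by simp [hb1ne.symm]), Finset.card_singleton]
      norm_num
    · intro x hx
      simp only [Finset.mem_insert, Finset.mem_singleton] at hx
      rcases hx with rfl | rfl
      · exact ha1m
      · exact (hmemNc _).mpr hb1
  rw [Finset.mem_sdiff, Finset.mem_insert, Finset.mem_singleton] at ha2m
  push_neg at ha2m
  obtain ⟨ha2m, ha2a1, ha2b1⟩ := ha2m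
  have ha2 : G.Adj c a2 := (hmemNc a2).mp ha2m
  have hb2 : G.Adj c (P a2) := hcP a2 ha2
  have hb2ne : P a2 ≠ a2 := hPne a2 ha2
  have hb2a1 : P a2 ≠ a1 := by
    intro h
    apply ha2b1
    rw [← h, hPP a2 ha2]
  have hb2b1 : P a2 ≠ P a1 := by
    intro h
    apply ha2a1
    rw [← hPP a2 ha2, h, hPP a1 ha1]
  obtain ⟨a3, ha3m⟩ : (Nc \ {a1, P a1, a2, P a2}).Nonempty := by
    rw [← Finset.card_pos, Finset.card_sdiff_of_subset]
    · have : ({a1, P a1, a2, P a2} : Finset V).card = 4 := by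
        rw [Finset.card_insert_of_notMem (by simp [hb1ne.symm, ha2a1.symm, hb2a1.symm]),
          Finset.card_insert_of_notMem (by simp [ha2b1.symm, hb2b1.symm]),
          Finset.card_insert_of_notMem (by simp [hb2ne.symm]), Finset.card_singleton]
      rw [hNcc, this]
      norm_num
    · intro x hx
      simp only [Finset.mem_insert, Finset.mem_singleton] at hx
      rcases hx with rfl | rfl | rfl | rfl
      · exact ha1m
      · exact (hmemNc _).mpr hb1
      · exact ha2m
      · exact (hmemNc _).mpr hb2
  rw [Finset.mem_sdiff, Finset.mem_insert, Finset.mem_insert, Finset.mem_insert,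
    Finset.mem_singleton] at ha3m
  push_neg at ha3m
  obtain ⟨ha3m, ha3a1, ha3b1, ha3a2, ha3b2⟩ := ha3m
  have ha3 : G.Adj c a3 := (hmemNc a3).mp ha3m
  have hb3 : G.Adj c (P a3) := hcP a3 ha3
  have hb3ne : P a3 ≠ a3 := hPne a3 ha3
  have hb3a1 : P a3 ≠ a1 := by
    intro h; apply ha3b1; rw [← h, hPP a3 ha3]
  have hb3b1 : P a3 ≠ P a1 := by
    intro h; apply ha3a1; rw [← hPP a3 ha3, h, hPP a1 ha1]
  have hb3a2 : P a3 ≠ a2 := by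
    intro h; apply ha3b2; rw [← h, hPP a3 ha3]
  have hb3b2 : P a3 ≠ P a2 := by
    intro h; apply ha3a2; rw [← hPP a3 ha3, h, hPP a2 ha2]
  -- Nc is exactly these six vertices
  have hNceq : Nc = {a1, P a1, a2, P a2, a3, P a3} := by
    symm
    apply Finset.eq_of_subset_of_card_le
    · intro x hx
      simp only [Finset.mem_insert, Finset.mem_singleton] at hx
      rcases hx with rfl | rfl | rfl | rfl | rfl | rfl
      · exact ha1m
      · exact (hmemNc _).mpr hb1
      · exact ha2m
      · exact (hmemNc _).mpr hb2
      · exact ha3m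
      · exact (hmemNc _).mpr hb3
    · rw [hNcc]
      rw [Finset.card_insert_of_notMem (by
          simp [hb1ne.symm, ha2a1.symm, hb2a1.symm, ha3a1.symm, hb3a1.symm]),
        Finset.card_insert_of_notMem (by
          simp [ha2b1.symm, hb2b1.symm, ha3b1.symm, hb3b1.symm]),
        Finset.card_insert_of_notMem (by simp [hb2ne.symm, ha3a2.symm, hb3a2.symm]),
        Finset.card_insert_of_notMem (by simp [ha3b2.symm, hb3b2.symm]),
        Finset.card_insert_of_notMem (by simp [hb3ne.symm]), Finset.card_singleton]
  -- triangle edges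
  have hp1 : G.Adj a1 (P a1) := haP a1 ha1
  have hp2 : G.Adj a2 (P a2) := haP a2 ha2
  have hp3 : G.Adj a3 (P a3) := haP a3 ha3
  -- cross non-adjacencies
  have N13 : ¬ G.Adj a1 a2 := hcross a1 a2 ha1 ha2 ha2b1
  have N14 : ¬ G.Adj a1 (P a2) := hcross a1 (P a2) ha1 hb2 hb2b1
  have N15 : ¬ G.Adj a1 a3 := hcross a1 a3 ha1 ha3 ha3b1
  have N16 : ¬ G.Adj a1 (P a3) := hcross a1 (P a3) ha1 hb3 hb3b1
  have N23 : ¬ G.Adj (P a1) a2 := hcross (P a1) a2 hb1 ha2 (by rw [hPP a1 ha1]; exact ha2a1)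
  have N24 : ¬ G.Adj (P a1) (P a2) := hcross (P a1) (P a2) hb1 hb2 (by rw [hPP a1 ha1]; exact hb2a1)
  have N25 : ¬ G.Adj (P a1) a3 := hcross (P a1) a3 hb1 ha3 (by rw [hPP a1 ha1]; exact ha3a1)
  have N26 : ¬ G.Adj (P a1) (P a3) := hcross (P a1) (P a3) hb1 hb3 (by rw [hPP a1 ha1]; exact hb3a1)
  have N35 : ¬ G.Adj a2 a3 := hcross a2 a3 ha2 ha3 ha3b2
  have N36 : ¬ G.Adj a2 (P a3) := hcross a2 (P a3) ha2 hb3 hb3b2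
  have N45 : ¬ G.Adj (P a2) a3 := hcross (P a2) a3 hb2 ha3 (by rw [hPP a2 ha2]; exact ha3a2)
  have N46 : ¬ G.Adj (P a2) (P a3) := hcross (P a2) (P a3) hb2 hb3 (by rw [hPP a2 ha2]; exact hb3a2)
  -- the universe is c together with its neighbours
  have hcnot : c ∉ Nc := by simp [hmemNc]
  have huniv : (univ : Finset V) = insert c Nc := by
    ext v
    simp only [Finset.mem_univ, true_iff, Finset.mem_insert, hmemNc]
    exact hclo v
  have hcardV : Fintype.card V = 7 := by
    rw [← Finset.card_univ, huniv, Finset.card_insert_of_notMem hcnot, hNcc]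
  let ψ : Fin (2 * 3 + 1) → V := ![c, a1, P a1, a2, P a2, a3, P a3]
  have hsurj : Function.Surjective ψ := by
    intro v
    rcases hclo v with rfl | hv
    · exact ⟨0, rfl⟩
    · have hm : v ∈ Nc := (hmemNc v).mpr hv
      rw [hNceq] at hm
      simp only [Finset.mem_insert, Finset.mem_singleton] at hm
      rcases hm with rfl | rfl | rfl | rfl | rfl | rfl
      · exact ⟨1, rfl⟩
      · exact ⟨2, rfl⟩
      · exact ⟨3, rfl⟩
      · exact ⟨4, rfl⟩
      · exact ⟨5, rfl⟩
      · exact ⟨6, rfl⟩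
  have hbij : Function.Bijective ψ := by
    rw [Fintype.bijective_iff_surjective_and_card]
    refine ⟨hsurj, ?_⟩
    rw [hcardV]
    rfl
  refine ⟨SimpleGraph.Iso.symm ⟨Equiv.ofBijective ψ hbij, ?_⟩⟩
  intro i j
  fin_cases i <;> fin_cases j
  · exact iff_of_false G.irrefl (by rw [friendship, SimpleGraph.fromRel_adj]; decide)
  · exact iff_of_true ha1 (by rw [friendship, SimpleGraph.fromRel_adj]; decide)
  · exact iff_of_true hb1 (by rw [friendship, SimpleGraph.fromRel_adj]; decide)
  · exact iff_of_true ha2 (by rw [friendship, SimpleGraph.fromRel_adj]; decide)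
  · exact iff_of_true hb2 (by rw [friendship, SimpleGraph.fromRel_adj]; decide)
  · exact iff_of_true ha3 (by rw [friendship, SimpleGraph.fromRel_adj]; decide)
  · exact iff_of_true hb3 (by rw [friendship, SimpleGraph.fromRel_adj]; decide)
  · exact iff_of_true (ha1).symm (by rw [friendship, SimpleGraph.fromRel_adj]; decide)
  · exact iff_of_false G.irrefl (by rw [friendship, SimpleGraph.fromRel_adj]; decide)
  · exact iff_of_true hp1 (by rw [friendship, SimpleGraph.fromRel_adj]; decide)
  · exact iff_of_false N13 (by rw [friendship, SimpleGraph.fromRel_adj]; decide)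
  · exact iff_of_false N14 (by rw [friendship, SimpleGraph.fromRel_adj]; decide)
  · exact iff_of_false N15 (by rw [friendship, SimpleGraph.fromRel_adj]; decide)
  · exact iff_of_false N16 (by rw [friendship, SimpleGraph.fromRel_adj]; decide)
  · exact iff_of_true (hb1).symm (by rw [friendship, SimpleGraph.fromRel_adj]; decide)
  · exact iff_of_true (hp1).symm (by rw [friendship, SimpleGraph.fromRel_adj]; decide)
  · exact iff_of_false G.irrefl (by rw [friendship, SimpleGraph.fromRel_adj]; decide)
  · exact iff_of_false N23 (by rw [friendship, SimpleGraph.fromRel_adj]; decide)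
  · exact iff_of_false N24 (by rw [friendship, SimpleGraph.fromRel_adj]; decide)
  · exact iff_of_false N25 (by rw [friendship, SimpleGraph.fromRel_adj]; decide)
  · exact iff_of_false N26 (by rw [friendship, SimpleGraph.fromRel_adj]; decide)
  · exact iff_of_true (ha2).symm (by rw [friendship, SimpleGraph.fromRel_adj]; decide)
  · exact iff_of_false (fun h => N13 h.symm) (by rw [friendship, SimpleGraph.fromRel_adj]; decide)
  · exact iff_of_false (fun h => N23 h.symm) (by rw [friendship, SimpleGraph.fromRel_adj]; decide)
  · exact iff_of_false G.irrefl (by rw [friendship, SimpleGraph.fromRel_adj]; decide)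
  · exact iff_of_true hp2 (by rw [friendship, SimpleGraph.fromRel_adj]; decide)
  · exact iff_of_false N35 (by rw [friendship, SimpleGraph.fromRel_adj]; decide)
  · exact iff_of_false N36 (by rw [friendship, SimpleGraph.fromRel_adj]; decide)
  · exact iff_of_true (hb2).symm (by rw [friendship, SimpleGraph.fromRel_adj]; decide)
  · exact iff_of_false (fun h => N14 h.symm) (by rw [friendship, SimpleGraph.fromRel_adj]; decide)
  · exact iff_of_false (fun h => N24 h.symm) (by rw [friendship, SimpleGraph.fromRel_adj]; decide)
  · exact iff_of_true (hp2).symm (by rw [friendship, SimpleGraph.fromRel_adj]; decide)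
  · exact iff_of_false G.irrefl (by rw [friendship, SimpleGraph.fromRel_adj]; decide)
  · exact iff_of_false N45 (by rw [friendship, SimpleGraph.fromRel_adj]; decide)
  · exact iff_of_false N46 (by rw [friendship, SimpleGraph.fromRel_adj]; decide)
  · exact iff_of_true (ha3).symm (by rw [friendship, SimpleGraph.fromRel_adj]; decide)
  · exact iff_of_false (fun h => N15 h.symm) (by rw [friendship, SimpleGraph.fromRel_adj]; decide)
  · exact iff_of_false (fun h => N25 h.symm) (by rw [friendship, SimpleGraph.fromRel_adj]; decide)
  · exact iff_of_false (fun h => N35 h.symm) (by rw [friendship, SimpleGraph.fromRel_adj]; decide)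
  · exact iff_of_false (fun h => N45 h.symm) (by rw [friendship, SimpleGraph.fromRel_adj]; decide)
  · exact iff_of_false G.irrefl (by rw [friendship, SimpleGraph.fromRel_adj]; decide)
  · exact iff_of_true hp3 (by rw [friendship, SimpleGraph.fromRel_adj]; decide)
  · exact iff_of_true (hb3).symm (by rw [friendship, SimpleGraph.fromRel_adj]; decide)
  · exact iff_of_false (fun h => N16 h.symm) (by rw [friendship, SimpleGraph.fromRel_adj]; decide)
  · exact iff_of_false (fun h => N26 h.symm) (by rw [friendship, SimpleGraph.fromRel_adj]; decide)
  · exact iff_of_false (fun h => N36 h.symm) (by rw [friendship, SimpleGraph.fromRel_adj]; decide)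
  · exact iff_of_false (fun h => N46 h.symm) (by rw [friendship, SimpleGraph.fromRel_adj]; decide)
  · exact iff_of_true (hp3).symm (by rw [friendship, SimpleGraph.fromRel_adj]; decide)
  · exact iff_of_false G.irrefl (by rw [friendship, SimpleGraph.fromRel_adj]; decide)
end
end

section
/- Let G be a simple connected C4-free positively LLY-curved graph with Δ(G) = 4 containing two triangles xyw and xu1u2 sharing the degree-4 vertex x. If additionally d_y = 4, i.e. y is also the apex of a second triangle with neighbors v_1, v_2, and d(u_i, v_j) = 3 for all i,j ∈ {1,2}, then κ_LLY(x,y) ≤ −1/4, a contradiction; hence this configuration (graph F of two friendship graphs F_2 sharing a triangle) cannot occur in G. -/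
open Finset

noncomputable section
open scoped Classical

variable {V : Type*}

theorem stmt19 [Fintype V] (G : SimpleGraph V) (hconn : G.Connected)
    (h4 : C4Free G) (hpos : PosLLY G)
    (hmin : ∀ v : V, 2 ≤ deg G v) (hmax : maxDeg G = 4)
    (x y w u₁ u₂ v₁ v₂ : V)
    (hdist : List.Pairwise (· ≠ ·) [x, y, w, u₁, u₂, v₁, v₂])
    (h1 : G.Adj x y) (h2 : G.Adj x w) (h3 : G.Adj y w)
    (h5 : G.Adj x u₁) (h6 : G.Adj x u₂) (h7 : G.Adj u₁ u₂)
    (h8 : G.Adj y v₁) (h9 : G.Adj y v₂) (h10 : G.Adj v₁ v₂)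
    (hdx : deg G x = 4) (hdy : deg G y = 4)
    (hd11 : G.dist u₁ v₁ = 3) (hd12 : G.dist u₁ v₂ = 3)
    (hd21 : G.dist u₂ v₁ = 3) (hd22 : G.dist u₂ v₂ = 3) :
    False := by
  simp only [List.pairwise_cons, List.mem_cons, List.mem_singleton,
    List.not_mem_nil, forall_eq_or_imp, forall_eq, and_true] at hdist
  obtain ⟨⟨hxy, hxw, hxu1, hxu2, hxv1, hxv2, -⟩, ⟨hyw, hyu1, hyu2, hyv1, hyv2, -⟩,
    ⟨hwu1, hwu2, hwv1, hwv2, -⟩, ⟨hu12, hu1v1, hu1v2, -⟩, ⟨hu2v1, hu2v2, -⟩,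
    ⟨hv12, -⟩, -⟩ := hdist
  -- distance helper lemmas
  have dlip : ∀ a p q : V, |(G.dist a p : ℝ) - (G.dist a q : ℝ)| ≤ (G.dist p q : ℝ) := by
    intro a p q
    rw [abs_sub_le_iff]
    constructor
    · have h := hconn.dist_triangle (u := a) (v := q) (w := p)
      rw [SimpleGraph.dist_comm (u := q) (v := p)] at h
      have := (Nat.cast_le (α := ℝ)).mpr h
      push_cast at this ⊢
      linarith
    · have h := hconn.dist_triangle (u := a) (v := p) (w := q)
      have := (Nat.cast_le (α := ℝ)).mpr h
      push_cast at this ⊢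
      linarith
  have adj1 : ∀ p q : V, G.Adj p q → G.dist p q = 1 := fun p q h =>
    SimpleGraph.dist_eq_one_iff_adj.mpr h
  have dist2 : ∀ a b c : V, G.Adj a b → G.Adj b c → ¬ G.Adj a c → a ≠ c →
      G.dist a c = 2 := by
    intro a b c hab hbc hnac hne
    have hle : G.dist a c ≤ 2 := by
      have := hconn.dist_triangle (u := a) (v := b) (w := c)
      rw [adj1 _ _ hab, adj1 _ _ hbc] at this
      exact this
    have h0 : G.dist a c ≠ 0 := (hconn.pos_dist_of_ne hne).ne'
    have h1' : G.dist a c ≠ 1 := fun h => hnac (SimpleGraph.dist_eq_one_iff_adj.mp h)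
    omega
  -- non-adjacencies via C4-freeness
  have hnxv1 : ¬ G.Adj x v₁ := fun h =>
    h4 x v₁ v₂ y hxv1 hv12 (Ne.symm hyv2) (Ne.symm hxy) hxv2 (Ne.symm hyv1)
      ⟨h, h10, h9.symm, h1.symm⟩
  have hnxv2 : ¬ G.Adj x v₂ := fun h =>
    h4 x v₂ v₁ y hxv2 (Ne.symm hv12) (Ne.symm hyv1) (Ne.symm hxy) hxv1 (Ne.symm hyv2)
      ⟨h, h10.symm, h8.symm, h1.symm⟩
  have hnwv1 : ¬ G.Adj w v₁ := fun h =>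
    h4 w v₁ y x hwv1 (Ne.symm hyv1) (Ne.symm hxy) hxw (Ne.symm hyw) (Ne.symm hxv1)
      ⟨h, h8.symm, h1.symm, h2⟩
  have hnwv2 : ¬ G.Adj w v₂ := fun h =>
    h4 w v₂ y x hwv2 (Ne.symm hyv2) (Ne.symm hxy) hxw (Ne.symm hyw) (Ne.symm hxv2)
      ⟨h, h9.symm, h1.symm, h2⟩
  -- distances from v₁, v₂
  have dv1y : G.dist v₁ y = 1 := adj1 _ _ h8.symm
  have dv2y : G.dist v₂ y = 1 := adj1 _ _ h9.symm
  have dv1v2 : G.dist v₂ v₁ = 1 := adj1 _ _ h10.symm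
  have dv1x : G.dist v₁ x = 2 :=
    dist2 v₁ y x h8.symm h1.symm (fun h => hnxv1 h.symm) (Ne.symm hxv1)
  have dv2x : G.dist v₂ x = 2 :=
    dist2 v₂ y x h9.symm h1.symm (fun h => hnxv2 h.symm) (Ne.symm hxv2)
  have dv1w : G.dist v₁ w = 2 :=
    dist2 v₁ y w h8.symm h3 (fun h => hnwv1 h.symm) (Ne.symm hwv1)
  have dv2w : G.dist v₂ w = 2 :=
    dist2 v₂ y w h9.symm h3 (fun h => hnwv2 h.symm) (Ne.symm hwv2)
  have dv1u1 : G.dist v₁ u₁ = 3 := by rw [SimpleGraph.dist_comm]; exact hd11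
  have dv2u1 : G.dist v₂ u₁ = 3 := by rw [SimpleGraph.dist_comm]; exact hd12
  have dv1u2 : G.dist v₁ u₂ = 3 := by rw [SimpleGraph.dist_comm]; exact hd21
  have dv2u2 : G.dist v₂ u₂ = 3 := by rw [SimpleGraph.dist_comm]; exact hd22
  -- the test function
  set f : V → ℝ := fun z =>
    max (2 - min (G.dist v₁ z : ℝ) (G.dist v₂ z : ℝ)) (-1) with hf
  have hLip : Lip1 G f := by
    intro p q
    have h1' : |f p - f q| ≤
        |(2 - min (G.dist v₁ p : ℝ) (G.dist v₂ p : ℝ)) -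
          (2 - min (G.dist v₁ q : ℝ) (G.dist v₂ q : ℝ))| :=
      abs_max_sub_max_le_abs _ _ _
    have h2' : |(2 - min (G.dist v₁ p : ℝ) (G.dist v₂ p : ℝ)) -
          (2 - min (G.dist v₁ q : ℝ) (G.dist v₂ q : ℝ))| =
        |min (G.dist v₁ q : ℝ) (G.dist v₂ q : ℝ) -
          min (G.dist v₁ p : ℝ) (G.dist v₂ p : ℝ)| := by
      congr 1
      ring
    have h3' := abs_min_sub_min_le_max ((G.dist v₁ q : ℝ)) ((G.dist v₂ q : ℝ))
      ((G.dist v₁ p : ℝ)) ((G.dist v₂ p : ℝ))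
    have h4' : max |(G.dist v₁ q : ℝ) - (G.dist v₁ p : ℝ)|
        |(G.dist v₂ q : ℝ) - (G.dist v₂ p : ℝ)| ≤ (G.dist p q : ℝ) := by
      apply max_le
      · have := dlip v₁ q p
        rwa [SimpleGraph.dist_comm (u := q) (v := p)] at this
      · have := dlip v₂ q p
        rwa [SimpleGraph.dist_comm (u := q) (v := p)] at this
    calc |f p - f q| ≤ _ := h1'
      _ = _ := h2'
      _ ≤ _ := h3'
      _ ≤ _ := h4'
  -- values of f
  have dv1v2' : G.dist v₁ v₂ = 1 := adj1 _ _ h10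
  have fv1 : f v₁ = 2 := by
    rw [hf]; simp only; rw [SimpleGraph.dist_self, dv1v2]; norm_num
  have fv2 : f v₂ = 2 := by
    rw [hf]; simp only; rw [SimpleGraph.dist_self, dv1v2']; norm_num
  have fy : f y = 1 := by
    rw [hf]; simp only; rw [dv1y, dv2y]; norm_num
  have fx : f x = 0 := by
    rw [hf]; simp only; rw [dv1x, dv2x]; norm_num
  have fw : f w = 0 := by
    rw [hf]; simp only; rw [dv1w, dv2w]; norm_num
  have fu1 : f u₁ = -1 := by
    rw [hf]; simp only; rw [dv1u1, dv2u1]; norm_num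
  have fu2 : f u₂ = -1 := by
    rw [hf]; simp only; rw [dv1u2, dv2u2]; norm_num
  -- neighborhoods of x and y
  have hNx : (Finset.univ.filter fun z => G.Adj x z) = {y, w, u₁, u₂} := by
    symm
    apply Finset.eq_of_subset_of_card_le
    · intro z hz
      simp only [Finset.mem_insert, Finset.mem_singleton] at hz
      simp only [Finset.mem_filter, Finset.mem_univ, true_and]
      rcases hz with rfl | rfl | rfl | rfl
      exacts [h1, h2, h5, h6]
    · rw [show (Finset.univ.filter fun z => G.Adj x z).card = 4 from hdx]
      rw [Finset.card_insert_of_notMem (by simp [hyw, hyu1, hyu2]),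
        Finset.card_insert_of_notMem (by simp [hwu1, hwu2]),
        Finset.card_insert_of_notMem (by simp [hu12]), Finset.card_singleton]
  have hNy : (Finset.univ.filter fun z => G.Adj y z) = {x, w, v₁, v₂} := by
    symm
    apply Finset.eq_of_subset_of_card_le
    · intro z hz
      simp only [Finset.mem_insert, Finset.mem_singleton] at hz
      simp only [Finset.mem_filter, Finset.mem_univ, true_and]
      rcases hz with rfl | rfl | rfl | rfl
      exacts [h1.symm, h3, h8, h9]
    · rw [show (Finset.univ.filter fun z => G.Adj y z).card = 4 from hdy]
      rw [Finset.card_insert_of_notMem (by simp [hxw, hxv1, hxv2]),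
        Finset.card_insert_of_notMem (by simp [hwv1, hwv2]),
        Finset.card_insert_of_notMem (by simp [hv12]), Finset.card_singleton]
  -- Laplacian values
  have lapx : lap G f x = -(1/4 : ℝ) := by
    rw [lap, hdx, hNx]
    rw [Finset.sum_insert (by simp [hyw, hyu1, hyu2]),
      Finset.sum_insert (by simp [hwu1, hwu2]), Finset.sum_pair hu12]
    rw [fy, fw, fu1, fu2, fx]
    norm_num
  have lapy : lap G f y = 0 := by
    rw [lap, hdy, hNy]
    rw [Finset.sum_insert (by simp [hxw, hxv1, hxv2]),
      Finset.sum_insert (by simp [hwv1, hwv2]), Finset.sum_pair hv12]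
    rw [fx, fw, fv1, fv2, fy]
    norm_num
  -- conclude
  have hmem : (-(1/4) : ℝ) ∈
      {r : ℝ | ∃ g : V → ℝ, Lip1 G g ∧ g y - g x = 1 ∧ r = lap G g x - lap G g y} :=
    ⟨f, hLip, by rw [fy, fx]; norm_num, by rw [lapx, lapy]; ring⟩
  have hk := hpos x y h1
  rw [kappa] at hk
  by_cases hb : BddBelow
      {r : ℝ | ∃ g : V → ℝ, Lip1 G g ∧ g y - g x = 1 ∧ r = lap G g x - lap G g y}
  · have := csInf_le hb hmem
    linarith
  · rw [csInf_of_not_bddBelow hb, Real.sInf_empty] at hk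
    exact lt_irrefl 0 hk
end
end
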